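/- arXiv:1908.05983 — 6 statements merged into one kernel-verified Lean document; each statement's English description precedes it below -/
import Mathlib

section
/- Let n_1 ≤ n_2 ≤ ... ≤ n_r be positive integers with k ≤ n_1. The maximum number of edges in a subgraph of the complete multipartite graph K_{n_1,...,n_r} containing no k pairwise vertex-disjoint edges (no matching of size k) equals (k-1)(n_2 + n_3 + ... + n_r). -/
/-- `H` (a family of finite edge sets) contains a matching of size `k`:
`k` pairwise disjoint edges. -/
def hasMatching {α : Type*} [DecidableEq α] (H : Finset (Finset α)) (k : ℕ) : Prop :=
  ∃ M ⊆ H, M.card = k ∧ (M : Set (Finset α)).Pairwise Disjoint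

/-- The edge set of the complete `r`-partite `s`-uniform hypergraph with parts
`V i = Fin (n i)`: all `s`-sets meeting each part in at most one vertex. -/
def crossEdges (r s : ℕ) (n : Fin r → ℕ) : Finset (Finset ((i : Fin r) × Fin (n i))) :=
  Finset.univ.filter fun S =>
    S.card = s ∧ ∀ i : Fin r, (S.filter fun v => v.1 = i).card ≤ 1

/-
Write `m = k - 1` and `T = n₂ + ⋯ + n_r`, the largest degree of the host graph. The star joining
`m` vertices of a smallest class to all vertices outside that class has `m T` edges, and every
matching in it has at most `m` edges since each edge meets those `m` vertices.

For the upper bound we induct on `m`, for any multipartite host whose classes all have more than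
`m` vertices and whose degrees are at most `T`. If `H` has a matching `M` of size `m` (otherwise
the induction hypothesis applies), some edge `uv ∈ M` is light: `deg u + deg v ≤ T + m`.
Deleting `u` and `v` removes `deg u + deg v - 1` edges and leaves a host with classes of size at
least `m` and degrees at most `T - 1`, so `|H| ≤ (m - 1)(T - 1) + T + m - 1 = m T`.

To find a light edge, note `deg u + deg v = |N(u) ∪ N(v)| + |N(u) ∩ N(v)|`, where the
intersection avoids the classes of `u` and `v`; since the class of `v` has more than `m`
vertices, `uv` is light once `|N(u) ∪ N(v)| ≤ 2m + 1`, i.e. once at most one unmatched vertex is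
adjacent to `u` or `v`. Otherwise, as `M` is maximum, there is no augmenting path `x u v y`, so
one end, say `v`, has no unmatched neighbour and `u` has at least two. Then either `deg v ≤ m`
and `uv` is light, or `v` is adjacent to both ends of another edge `u'v'` of `M`; an unmatched
neighbour of `u'` or `v'` would give an augmenting path `x u v v' u' y`, so `u'v'` is light.
-/

open Finset

variable {α ι : Type*}

def IsPartite (part : α → ι) (V : Finset α) (H : Finset (Finset α)) : Prop :=
  ∀ e ∈ H, e ⊆ V ∧ #e = 2 ∧ Set.InjOn part e

lemma IsPartite.mono {part : α → ι} {V : Finset α} {H H' : Finset (Finset α)}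
    (hH : IsPartite part V H) (h : H' ⊆ H) : IsPartite part V H' :=
  fun e he => hH e (h he)

variable [DecidableEq α]

def nbrs (V : Finset α) (H : Finset (Finset α)) (u : α) : Finset α :=
  V.filter fun w => {u, w} ∈ H

@[simp] lemma mem_nbrs {V : Finset α} {H : Finset (Finset α)} {u w : α} :
    w ∈ nbrs V H u ↔ w ∈ V ∧ {u, w} ∈ H :=
  mem_filter

lemma nbrs_subset_union_nbrs_sdiff (V S : Finset α) (H : Finset (Finset α)) (u : α) :
    nbrs V H u ⊆ S ∪ nbrs (V \ S) H u := fun w hw => by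
  by_cases hwS : w ∈ S
  · exact mem_union_left _ hwS
  · exact mem_union_right _ (by simp_all)

lemma pair_ne_pair_of_notMem {a b c d : α} (h : a ∉ ({c, d} : Finset α)) :
    ({a, b} : Finset α) ≠ {c, d} :=
  fun h' => h (h' ▸ mem_insert_self a {b})

lemma exists_ne_of_one_lt_card_union {s t : Finset α} (hs : s.Nonempty) (ht : t.Nonempty)
    (h : 1 < #(s ∪ t)) : ∃ a ∈ s, ∃ b ∈ t, a ≠ b := by
  obtain ⟨x, hx⟩ := hs
  obtain ⟨y, hy⟩ := ht
  by_cases hxy : x = y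
  · subst hxy
    obtain ⟨z, hz, hzx⟩ := (one_lt_card_iff_nontrivial.1 h).exists_ne x
    rcases mem_union.1 hz with hz | hz
    · exact ⟨z, hz, x, hy, hzx⟩
    · exact ⟨x, hx, z, hz, hzx.symm⟩
  · exact ⟨x, hx, y, hy, hxy⟩

lemma card_filter_sdiff_add_card_filter {V S : Finset α} (hS : S ⊆ V) (p : α → Prop)
    [DecidablePred p] : #((V \ S).filter p) + #(S.filter p) = #(V.filter p) := by
  rw [← card_union_of_disjoint (disjoint_filter_filter sdiff_disjoint), ← filter_union,
    sdiff_union_of_subset hS]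

section PartClasses

variable [DecidableEq ι] {part : α → ι} {V : Finset α} {u v : α}

lemma card_filter_pair_part_eq_le_one (huv : part u ≠ part v) (i : ι) :
    #(({u, v} : Finset α).filter (part · = i)) ≤ 1 := by
  refine card_le_one.2 fun a ha b hb => ?_
  simp only [mem_filter, mem_insert, mem_singleton] at ha hb
  rcases ha with ⟨rfl | rfl, ha⟩ <;> rcases hb with ⟨rfl | rfl, hb⟩ <;> first
    | rfl | exact absurd (ha.trans hb.symm) huv | exact absurd (hb.trans ha.symm) huv

lemma card_filter_part_eq_le_card_filter_sdiff_pair (hu : u ∈ V) (hv : v ∈ V)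
    (huv : part u ≠ part v) (i : ι) :
    #(V.filter (part · = i)) ≤ #((V \ {u, v}).filter (part · = i)) + 1 := by
  rw [← card_filter_sdiff_add_card_filter (insert_subset hu (singleton_subset_iff.2 hv))]
  have := card_filter_pair_part_eq_le_one huv i
  omega

lemma card_filter_sdiff_pair_part_ne_lt (hu : u ∈ V) (hv : v ∈ V) (huv : part u ≠ part v)
    (i : ι) : #((V \ {u, v}).filter (part · ≠ i)) < #(V.filter (part · ≠ i)) := by
  rw [← card_filter_sdiff_add_card_filter (insert_subset hu (singleton_subset_iff.2 hv))]
  have h : #(({u, v} : Finset α).filter (part · = i)) +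
      #(({u, v} : Finset α).filter (part · ≠ i)) = #({u, v} : Finset α) :=
    card_filter_add_card_filter_not _
  rw [card_pair fun h => huv (congrArg part h)] at h
  have := card_filter_pair_part_eq_le_one huv i
  omega

end PartClasses

section Matching

variable {H M : Finset (Finset α)}

lemma card_le_card_of_forall_inter_nonempty {C : Finset α}
    (hM : (M : Set (Finset α)).Pairwise Disjoint) (hC : ∀ e ∈ M, (e ∩ C).Nonempty) :
    #M ≤ #C :=
  (card_le_card_biUnion (fun _ he _ hf hef =>
      (hM he hf hef).mono inter_subset_left inter_subset_left) hC).trans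
    (card_le_card (biUnion_subset.2 fun _ _ => inter_subset_right))

lemma exists_one_lt_card_inter {S : Finset α} (hM : (M : Set (Finset α)).Pairwise Disjoint)
    (hS : S ⊆ M.biUnion id) (h : #M < #S) : ∃ g ∈ M, 1 < #(S ∩ g) := by
  have hsum : #S = ∑ g ∈ M, #(S ∩ g) := by
    rw [← card_biUnion fun g hg g' hg' hgg' =>
        (hM hg hg' hgg').mono inter_subset_right inter_subset_right, ← inter_biUnion]
    exact congrArg card (inter_eq_left.2 hS).symm
  refine exists_lt_of_sum_lt ?_
  simpa [← hsum] using h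

lemma hasMatching_add_one_of_filter_disjoint {e : Finset α} {k : ℕ} (he : e ∈ H)
    (hne : e.Nonempty) (h : hasMatching (H.filter (Disjoint e)) k) : hasMatching H (k + 1) := by
  obtain ⟨M, hMH, rfl, hM⟩ := h
  have heM : e ∉ M := fun h => hne.ne_empty (disjoint_self.1 (mem_filter.1 (hMH h)).2)
  refine ⟨insert e M, insert_subset he (hMH.trans (filter_subset _ _)),
    card_insert_of_notMem heM, ?_⟩
  rw [coe_insert]
  exact hM.insert_of_symm fun f hf _ => (mem_filter.1 (hMH hf)).2

lemma hasMatching_add_one_of_exchange {R A : Finset (Finset α)} (hMH : M ⊆ H)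
    (hM : (M : Set (Finset α)).Pairwise Disjoint) (hRM : R ⊆ M) (hAH : A ⊆ H)
    (hA : (A : Set (Finset α)).Pairwise Disjoint) (hAne : ∀ a ∈ A, a.Nonempty)
    (hAR : ∀ a ∈ A, ∀ x ∈ a, x ∈ M.biUnion id → x ∈ R.biUnion id)
    (hcard : #A = #R + 1) :
    hasMatching H (#M + 1) := by
  have hdisj : ∀ a ∈ A, ∀ f ∈ M \ R, Disjoint a f := by
    intro a ha f hf
    obtain ⟨hfM, hfR⟩ := mem_sdiff.1 hf
    refine disjoint_left.2 fun x hxa hxf => ?_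
    obtain ⟨g, hgR, hxg⟩ := mem_biUnion.1 (hAR a ha x hxa (mem_biUnion.2 ⟨f, hfM, hxf⟩))
    have hgf : g ≠ f := by rintro rfl; exact hfR hgR
    exact disjoint_left.1 (hM (hRM hgR) hfM hgf) hxg hxf
  have hAMR : Disjoint (M \ R) A := disjoint_right.2 fun a ha haMR =>
    (hAne a ha).ne_empty (disjoint_self.1 (hdisj a ha a haMR))
  refine ⟨(M \ R) ∪ A, union_subset (sdiff_subset.trans hMH) hAH, ?_, ?_⟩
  · rw [card_union_of_disjoint hAMR, card_sdiff_of_subset hRM, hcard, ← add_assoc,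
      Nat.sub_add_cancel (card_le_card hRM)]
  rw [coe_union, Set.pairwise_union_of_symm]
  exact ⟨hM.mono (by simp), hA, fun f hf a ha _ => (hdisj a ha f hf).symm⟩

end Matching

namespace IsPartite

variable {part : α → ι} {V : Finset α} {H M : Finset (Finset α)} {T : ℕ}

lemma part_ne (hH : IsPartite part V H) {u v : α} (h : {u, v} ∈ H) : part u ≠ part v := by
  intro huv
  have := (hH _ h).2.1
  rw [(hH _ h).2.2 (by simp) (by simp) huv] at this
  simp at this

lemma ne (hH : IsPartite part V H) {u v : α} (h : {u, v} ∈ H) : u ≠ v :=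
  fun huv => hH.part_ne h (congrArg part huv)

lemma mem_left (hH : IsPartite part V H) {u v : α} (h : {u, v} ∈ H) : u ∈ V :=
  (hH _ h).1 (by simp)

lemma mem_right (hH : IsPartite part V H) {u v : α} (h : {u, v} ∈ H) : v ∈ V :=
  (hH _ h).1 (by simp)

lemma exists_eq_pair (hH : IsPartite part V H) {e : Finset α} (he : e ∈ H) :
    ∃ u v, e = {u, v} := by
  obtain ⟨u, v, -, rfl⟩ := card_eq_two.1 (hH e he).2.1
  exact ⟨u, v, rfl⟩

lemma sdiff_filter_disjoint (hH : IsPartite part V H) (s : Finset α) :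
    IsPartite part (V \ s) (H.filter (Disjoint s)) := by
  intro e he
  obtain ⟨he, hse⟩ := mem_filter.1 he
  obtain ⟨heV, hcard, hinj⟩ := hH e he
  exact ⟨subset_sdiff.2 ⟨heV, hse.symm⟩, hcard, hinj⟩

lemma filter_mem_eq_image (hH : IsPartite part V H) (u : α) :
    H.filter (u ∈ ·) = (nbrs V H u).image ({u, ·}) := by
  ext e
  simp only [mem_filter, mem_image, mem_nbrs]
  constructor
  · rintro ⟨he, hue⟩
    obtain ⟨a, b, rfl⟩ := hH.exists_eq_pair he
    rcases mem_insert.1 hue with rfl | hub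
    · exact ⟨b, ⟨hH.mem_right he, he⟩, rfl⟩
    · obtain rfl := mem_singleton.1 hub
      rw [pair_comm] at he ⊢
      exact ⟨a, ⟨hH.mem_right he, he⟩, rfl⟩
  · rintro ⟨w, ⟨-, hw⟩, rfl⟩
    exact ⟨hw, by simp⟩

lemma card_filter_mem (hH : IsPartite part V H) (u : α) :
    #(H.filter (u ∈ ·)) = #(nbrs V H u) := by
  rw [hH.filter_mem_eq_image, card_image_of_injOn]
  intro w hw w' _ hww'
  have hw : w ≠ u := (hH.ne (mem_nbrs.1 hw).2).symm
  have : w ∈ ({u, w'} : Finset α) := by simp only at hww'; rw [← hww']; simp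
  simpa [hw] using this

lemma card_add_one_eq_of_pair_mem (hH : IsPartite part V H) {u v : α} (huv : {u, v} ∈ H) :
    #H + 1 = #(H.filter (Disjoint {u, v})) + #(nbrs V H u) + #(nbrs V H v) := by
  have hinter : H.filter (u ∈ ·) ∩ H.filter (v ∈ ·) = {{u, v}} := by
    ext e
    simp only [mem_inter, mem_filter, mem_singleton]
    constructor
    · rintro ⟨⟨he, hu⟩, -, hv⟩
      refine (eq_of_subset_of_card_le ?_ ?_).symm
      · simp [insert_subset_iff, hu, hv]
      · rw [(hH e he).2.1, card_pair (hH.ne huv)]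
    · rintro rfl
      simp [huv]
  have hmeet :
      H.filter (fun e => ¬Disjoint {u, v} e) = H.filter (u ∈ ·) ∪ H.filter (v ∈ ·) := by
    rw [← filter_or]
    ext e
    simp only [mem_filter, disjoint_insert_left, disjoint_singleton_left]
    tauto
  have := card_union_add_card_inter (H.filter (u ∈ ·)) (H.filter (v ∈ ·))
  rw [← hmeet, hinter, card_singleton, hH.card_filter_mem, hH.card_filter_mem] at this
  rw [← card_filter_add_card_filter_not (Disjoint {u, v})]
  omega

lemma card_biUnion_id (hH : IsPartite part V H) (hMH : M ⊆ H)
    (hM : (M : Set (Finset α)).Pairwise Disjoint) : #(M.biUnion id) = 2 * #M := by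
  rw [card_biUnion (t := id) fun e he f hf hef => hM he hf hef,
    sum_congr rfl (f := fun e => #(id e)) (g := fun _ => 2) fun e he => (hH e (hMH he)).2.1]
  simp [mul_comm]

lemma hasMatching_of_augmenting_three (hH : IsPartite part V H) (hMH : M ⊆ H)
    (hM : (M : Set (Finset α)).Pairwise Disjoint) {u v x y : α} (he : {u, v} ∈ M)
    (hx : x ∈ nbrs (V \ M.biUnion id) H u) (hy : y ∈ nbrs (V \ M.biUnion id) H v)
    (hxy : x ≠ y) : hasMatching H (#M + 1) := by
  simp only [mem_nbrs, mem_sdiff] at hx hy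
  have hmatched (z : α) (hz : z ∈ ({u, v} : Finset α)) : z ≠ x ∧ z ≠ y :=
    have hz : z ∈ M.biUnion id := mem_biUnion.2 ⟨_, he, hz⟩
    ⟨ne_of_mem_of_not_mem hz hx.1.2, ne_of_mem_of_not_mem hz hy.1.2⟩
  obtain ⟨_, _⟩ := hmatched u (by simp)
  obtain ⟨_, _⟩ := hmatched v (by simp)
  have := hH.ne (hMH he)
  refine hasMatching_add_one_of_exchange (R := {{u, v}}) (A := {{u, x}, {v, y}}) hMH hM
    (singleton_subset_iff.2 he) (by simp [insert_subset_iff, hx.2, hy.2])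
    (by simp [Set.pairwise_pair, disjoint_insert_right, *, Ne.symm])
    (by simp) (by simp [-mem_biUnion, hx.1.2, hy.1.2]) ?_
  rw [card_pair (pair_ne_pair_of_notMem (by simp [*])), card_singleton]

lemma hasMatching_of_augmenting_five (hH : IsPartite part V H) (hMH : M ⊆ H)
    (hM : (M : Set (Finset α)).Pairwise Disjoint) {u v u' v' x y : α} (he : {u, v} ∈ M)
    (hf : {u', v'} ∈ M) (hef : ({u, v} : Finset α) ≠ {u', v'}) (hvv' : {v, v'} ∈ H)
    (hx : x ∈ nbrs (V \ M.biUnion id) H u) (hy : y ∈ nbrs (V \ M.biUnion id) H u')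
    (hxy : x ≠ y) : hasMatching H (#M + 1) := by
  simp only [mem_nbrs, mem_sdiff] at hx hy
  have hdisj := hM he hf hef
  simp only [disjoint_insert_left, disjoint_singleton_left, mem_insert, mem_singleton,
    not_or] at hdisj
  have hmatched (z : α) (g : Finset α) (hg : g ∈ M) (hz : z ∈ g) : z ≠ x ∧ z ≠ y :=
    have hz : z ∈ M.biUnion id := mem_biUnion.2 ⟨g, hg, hz⟩
    ⟨ne_of_mem_of_not_mem hz hx.1.2, ne_of_mem_of_not_mem hz hy.1.2⟩
  obtain ⟨_, _⟩ := hmatched u _ he (by simp)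
  obtain ⟨_, _⟩ := hmatched v _ he (by simp)
  obtain ⟨_, _⟩ := hmatched u' _ hf (by simp)
  obtain ⟨_, _⟩ := hmatched v' _ hf (by simp)
  have := hH.ne (hMH he)
  have := hH.ne (hMH hf)
  refine hasMatching_add_one_of_exchange (R := {{u, v}, {u', v'}})
    (A := {{u, x}, {v, v'}, {u', y}}) hMH hM (by simp [insert_subset_iff, he, hf])
    (by simp [insert_subset_iff, hx.2, hy.2, hvv'])
    (by simp [Set.pairwise_insert, disjoint_insert_right, *, Ne.symm])
    (by simp) (by simp [-mem_biUnion, hx.1.2, hy.1.2]) ?_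
  rw [card_pair hef, card_eq_three.2 ⟨_, _, _, pair_ne_pair_of_notMem (by simp [*]),
    pair_ne_pair_of_notMem (by simp [*]), pair_ne_pair_of_notMem (by simp [*]), rfl⟩]

section Degrees

variable [DecidableEq ι]

lemma nbrs_subset_filter_part_ne (hH : IsPartite part V H) (u : α) :
    nbrs V H u ⊆ V.filter (part · ≠ part u) := fun w hw => by
  rw [mem_nbrs] at hw
  exact mem_filter.2 ⟨hw.1, (hH.part_ne hw.2).symm⟩

lemma card_nbrs_add_card_nbrs_le (hH : IsPartite part V H) {u v : α} (huv : {u, v} ∈ H)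
    {m : ℕ} (hsize : m + 1 ≤ #(V.filter (part · = part v)))
    (hT : #(V.filter (part · ≠ part u)) ≤ T)
    (hunion : #(nbrs V H u ∪ nbrs V H v) ≤ 2 * m + 1) :
    #(nbrs V H u) + #(nbrs V H v) ≤ T + m := by
  set W := V.filter fun x => part x ≠ part u ∧ part x ≠ part v
  have hinter : nbrs V H u ∩ nbrs V H v ⊆ W := fun x hx => by
    simp only [mem_inter, mem_nbrs] at hx
    exact mem_filter.2 ⟨hx.1.1, (hH.part_ne hx.1.2).symm, (hH.part_ne hx.2.2).symm⟩
  have hsplit : #(V.filter (part · = part v)) + #W = #(V.filter (part · ≠ part u)) := by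
    rw [← card_filter_add_card_filter_not (s := V.filter (part · ≠ part u)) (part · = part v),
      filter_filter, filter_filter]
    congr 2
    ext x
    simp only [mem_filter]
    constructor
    · rintro ⟨hx, hxv⟩
      exact ⟨hx, hxv ▸ (hH.part_ne huv).symm, hxv⟩
    · exact fun h => ⟨h.1, h.2.2⟩
  have := card_union_add_card_inter (nbrs V H u) (nbrs V H v)
  have := card_le_card hinter
  omega

lemma card_nbrs_add_card_nbrs_le_of_card_union_le_one (hH : IsPartite part V H)
    (hMH : M ⊆ H) (hM : (M : Set (Finset α)).Pairwise Disjoint)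
    (hsize : ∀ w ∈ V, #M + 1 ≤ #(V.filter (part · = part w)))
    (hT : ∀ w ∈ V, #(V.filter (part · ≠ part w)) ≤ T) {u v : α} (he : {u, v} ∈ M)
    (h : #(nbrs (V \ M.biUnion id) H u ∪ nbrs (V \ M.biUnion id) H v) ≤ 1) :
    #(nbrs V H u) + #(nbrs V H v) ≤ T + #M := by
  refine hH.card_nbrs_add_card_nbrs_le (hMH he) (hsize v (hH.mem_right (hMH he)))
    (hT u (hH.mem_left (hMH he))) ?_
  calc #(nbrs V H u ∪ nbrs V H v)
      ≤ #(M.biUnion id ∪ (nbrs (V \ M.biUnion id) H u ∪ nbrs (V \ M.biUnion id) H v)) := by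
        refine card_le_card (union_subset ?_ ?_) <;> intro w hw
        · have := nbrs_subset_union_nbrs_sdiff V (M.biUnion id) H u hw
          simp only [mem_union] at this ⊢; tauto
        · have := nbrs_subset_union_nbrs_sdiff V (M.biUnion id) H v hw
          simp only [mem_union] at this ⊢; tauto
    _ ≤ 2 * #M + 1 := (card_union_le _ _).trans (by rw [hH.card_biUnion_id hMH hM]; omega)

lemma exists_light_edge_of_nbrs_unmatched_eq_empty (hH : IsPartite part V H) (hMH : M ⊆ H)
    (hM : (M : Set (Finset α)).Pairwise Disjoint)
    (hsize : ∀ w ∈ V, #M + 1 ≤ #(V.filter (part · = part w)))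
    (hT : ∀ w ∈ V, #(V.filter (part · ≠ part w)) ≤ T) (hfree : ¬hasMatching H (#M + 1))
    {u v : α} (he : {u, v} ∈ M) (hu : 1 < #(nbrs (V \ M.biUnion id) H u))
    (hv : nbrs (V \ M.biUnion id) H v = ∅) :
    ∃ u v, {u, v} ∈ M ∧ #(nbrs V H u) + #(nbrs V H v) ≤ T + #M := by
  by_cases hdeg : #(nbrs V H v) ≤ #M
  · refine ⟨u, v, he, ?_⟩
    have := (card_le_card (hH.nbrs_subset_filter_part_ne u)).trans (hT u (hH.mem_left (hMH he)))
    omega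
  have hvM : nbrs V H v ⊆ M.biUnion id := by
    simpa [hv] using nbrs_subset_union_nbrs_sdiff V (M.biUnion id) H v
  obtain ⟨g, hgM, hg⟩ := exists_one_lt_card_inter hM hvM (by omega)
  obtain ⟨u', v', rfl⟩ := hH.exists_eq_pair (hMH hgM)
  have hsub : {u', v'} ⊆ nbrs V H v := inter_eq_right.1
    (eq_of_subset_of_card_le inter_subset_right (by rw [(hH _ (hMH hgM)).2.1]; omega))
  have hne : ({u, v} : Finset α) ≠ {u', v'} := fun h => by
    have := hsub (h ▸ mem_insert_of_mem (mem_singleton_self v))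
    exact hH.ne (mem_nbrs.1 this).2 rfl
  have hnone (a b : α) (hab : {a, b} ∈ M) (hne : ({u, v} : Finset α) ≠ {a, b})
      (hvb : {v, b} ∈ H) : nbrs (V \ M.biUnion id) H a = ∅ := by
    refine eq_empty_of_forall_notMem fun y hy => hfree ?_
    obtain ⟨x, hx, hxy⟩ := (one_lt_card_iff_nontrivial.1 hu).exists_ne y
    exact hH.hasMatching_of_augmenting_five hMH hM he hab hne hvb hx hy hxy
  have hu' := hnone u' v' hgM hne (mem_nbrs.1 (hsub (by simp))).2
  have hv' := hnone v' u' (pair_comm u' v' ▸ hgM) (pair_comm u' v' ▸ hne)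
    (mem_nbrs.1 (hsub (by simp))).2
  exact ⟨u', v', hgM, hH.card_nbrs_add_card_nbrs_le_of_card_union_le_one hMH hM hsize hT hgM
    (by simp [hu', hv'])⟩

lemma exists_light_edge (hH : IsPartite part V H) (hMH : M ⊆ H)
    (hM : (M : Set (Finset α)).Pairwise Disjoint) (hMne : M.Nonempty)
    (hsize : ∀ w ∈ V, #M + 1 ≤ #(V.filter (part · = part w)))
    (hT : ∀ w ∈ V, #(V.filter (part · ≠ part w)) ≤ T) (hfree : ¬hasMatching H (#M + 1)) :
    ∃ u v, {u, v} ∈ M ∧ #(nbrs V H u) + #(nbrs V H v) ≤ T + #M := by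
  obtain ⟨e, he⟩ := hMne
  obtain ⟨u, v, rfl⟩ := hH.exists_eq_pair (hMH he)
  by_cases hsmall : #(nbrs (V \ M.biUnion id) H u ∪ nbrs (V \ M.biUnion id) H v) ≤ 1
  · exact ⟨u, v, he,
      hH.card_nbrs_add_card_nbrs_le_of_card_union_le_one hMH hM hsize hT he hsmall⟩
  rcases (nbrs (V \ M.biUnion id) H u).eq_empty_or_nonempty with hu | hu
  · rw [hu, empty_union] at hsmall
    exact hH.exists_light_edge_of_nbrs_unmatched_eq_empty hMH hM hsize hT hfree
      (pair_comm u v ▸ he) (by omega) hu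
  rcases (nbrs (V \ M.biUnion id) H v).eq_empty_or_nonempty with hv | hv
  · rw [hv, union_empty] at hsmall
    exact hH.exists_light_edge_of_nbrs_unmatched_eq_empty hMH hM hsize hT hfree he
      (by omega) hv
  obtain ⟨x, hx, y, hy, hxy⟩ := exists_ne_of_one_lt_card_union hu hv (by omega)
  exact (hfree (hH.hasMatching_of_augmenting_three hMH hM he hx hy hxy)).elim

theorem card_le_mul_of_not_hasMatching {m : ℕ} (hH : IsPartite part V H)
    (hsize : ∀ w ∈ V, m + 1 ≤ #(V.filter (part · = part w)))
    (hT : ∀ w ∈ V, #(V.filter (part · ≠ part w)) ≤ T) (hfree : ¬hasMatching H (m + 1)) :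
    #H ≤ m * T := by
  induction m generalizing V H T with
  | zero =>
    suffices H = ∅ by simp [this]
    refine eq_empty_of_forall_notMem fun e he => hfree ⟨{e}, by simpa using he, ?_, by simp⟩
    exact card_singleton e
  | succ m ih =>
    by_cases hm : hasMatching H (m + 1)
    swap
    · exact (ih hH (fun w hw => (hsize w hw).trans' (by omega)) hT hm).trans
        (Nat.mul_le_mul_right _ (by omega))
    obtain ⟨M, hMH, hMcard, hM⟩ := hm
    obtain ⟨u, v, he, hlight⟩ := hH.exists_light_edge hMH hM (card_pos.1 (by omega))
      (by rwa [hMcard]) hT (by rwa [hMcard])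
    have huv := hMH he
    have hu := hH.mem_left huv
    have hv := hH.mem_right huv
    have hpart := hH.part_ne huv
    have hT' (w : α) (hw : w ∈ V \ {u, v}) :
        #((V \ {u, v}).filter (part · ≠ part w)) ≤ T - 1 :=
      have := card_filter_sdiff_pair_part_ne_lt hu hv hpart (part w)
      have := hT w (mem_sdiff.1 hw).1
      by omega
    have hsize' (w : α) (hw : w ∈ V \ {u, v}) :
        m + 1 ≤ #((V \ {u, v}).filter (part · = part w)) :=
      have := card_filter_part_eq_le_card_filter_sdiff_pair hu hv hpart (part w)
      have := hsize w (mem_sdiff.1 hw).1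
      by omega
    have hfree' : ¬hasMatching (H.filter (Disjoint {u, v})) (m + 1) := fun h =>
      hfree (hasMatching_add_one_of_filter_disjoint huv (insert_nonempty _ _) h)
    have hH' := ih (hH.sdiff_filter_disjoint {u, v}) hsize' hT' hfree'
    have hcount := hH.card_add_one_eq_of_pair_mem huv
    have hT1 : 1 ≤ T := (hT u hu).trans' (card_pos.2 ⟨v, mem_filter.2 ⟨hv, hpart.symm⟩⟩)
    obtain ⟨T, rfl⟩ := Nat.exists_eq_add_of_le' hT1
    rw [hMcard] at hlight
    simp only [Nat.add_sub_cancel] at hH'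
    nlinarith

end Degrees

end IsPartite

section Star

variable {C B : Finset α}

def starEdges (C B : Finset α) : Finset (Finset α) :=
  (C ×ˢ B).image fun p => {p.1, p.2}

lemma card_starEdges (hCB : Disjoint C B) : #(starEdges C B) = #C * #B := by
  rw [starEdges, card_image_of_injOn, card_product]
  rintro ⟨a, b⟩ hab ⟨a', b'⟩ hab' h
  simp only [coe_product, Set.mem_prod, mem_coe] at hab hab' h
  have ha : a ∈ ({a', b'} : Finset α) := h ▸ mem_insert_self a {b}
  have hb : b ∈ ({a', b'} : Finset α) := h ▸ mem_insert_of_mem (mem_singleton_self b)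
  simp only [mem_insert, mem_singleton] at ha hb
  have hab'' : a ≠ b' := ne_of_mem_of_not_mem hab.1 (disjoint_right.1 hCB hab'.2)
  have hba : b ≠ a' := ne_of_mem_of_not_mem hab.2 (disjoint_left.1 hCB hab'.1)
  simp_all

lemma not_hasMatching_starEdges : ¬hasMatching (starEdges C B) (#C + 1) := by
  rintro ⟨M, hM, hcard, hdisj⟩
  have : #M ≤ #C := card_le_card_of_forall_inter_nonempty hdisj fun e he => by
    obtain ⟨⟨a, b⟩, hab, rfl⟩ := mem_image.1 (hM he)
    exact ⟨a, mem_inter.2 ⟨mem_insert_self a {b}, (mem_product.1 hab).1⟩⟩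
  omega

end Star

section CrossEdges

variable {r : ℕ} {n : Fin r → ℕ}

lemma isPartite_crossEdges : IsPartite Sigma.fst univ (crossEdges r 2 n) := by
  intro e he
  simp only [crossEdges, mem_filter, mem_univ, true_and] at he
  refine ⟨subset_univ e, he.1, fun x hx y hy hxy => ?_⟩
  exact card_le_one.1 (he.2 x.1) x (mem_filter.2 ⟨hx, rfl⟩) y (mem_filter.2 ⟨hy, hxy.symm⟩)

lemma pair_mem_crossEdges {a b : (i : Fin r) × Fin (n i)} (hab : a.1 ≠ b.1) :
    {a, b} ∈ crossEdges r 2 n := by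
  simp only [crossEdges, mem_filter, mem_univ, true_and]
  refine ⟨card_pair fun h => hab (congrArg Sigma.fst h),
    fun i => card_le_one.2 fun x hx y hy => ?_⟩
  simp only [mem_filter, mem_insert, mem_singleton] at hx hy
  rcases hx with ⟨rfl | rfl, hx⟩ <;> rcases hy with ⟨rfl | rfl, hy⟩ <;> first
    | rfl | exact absurd (hx.trans hy.symm) hab | exact absurd (hy.trans hx.symm) hab

lemma card_filter_fst (p : Fin r → Prop) [DecidablePred p] :
    #(univ.filter fun x : (i : Fin r) × Fin (n i) => p x.1) = ∑ i ∈ univ.filter p, n i := by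
  have : univ.filter (fun x : (i : Fin r) × Fin (n i) => p x.1) =
      (univ.filter p).sigma fun _ => univ := by
    ext x
    simp
  rw [this, card_sigma]
  simp

lemma card_filter_fst_eq (j : Fin r) :
    #(univ.filter fun x : (i : Fin r) × Fin (n i) => x.1 = j) = n j := by
  rw [card_filter_fst (· = j), filter_eq', if_pos (mem_univ j), sum_singleton]

lemma card_filter_fst_ne_add (j : Fin r) :
    #(univ.filter fun x : (i : Fin r) × Fin (n i) => x.1 ≠ j) + n j =
      #(univ : Finset ((i : Fin r) × Fin (n i))) := by
  rw [← card_filter_fst_eq (n := n) j, add_comm]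
  exact card_filter_add_card_filter_not _

lemma exists_subset_crossEdges_not_hasMatching {m : ℕ} {j : Fin r} (hm : m ≤ n j) :
    ∃ H ⊆ crossEdges r 2 n, ¬hasMatching H (m + 1) ∧
      #H = m * #(univ.filter fun x : (i : Fin r) × Fin (n i) => x.1 ≠ j) := by
  obtain ⟨C, hC, rfl⟩ := exists_subset_card_eq
    (s := univ.filter fun x : (i : Fin r) × Fin (n i) => x.1 = j) (n := m)
    (by rwa [card_filter_fst_eq])
  have hCB : Disjoint C (univ.filter fun x => x.1 ≠ j) :=
    disjoint_left.2 fun x hx hx' => (mem_filter.1 hx').2 (mem_filter.1 (hC hx)).2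
  refine ⟨starEdges C _, fun e he => ?_, not_hasMatching_starEdges, card_starEdges hCB⟩
  obtain ⟨⟨a, b⟩, hab, rfl⟩ := mem_image.1 he
  obtain ⟨ha, hb⟩ := mem_product.1 hab
  exact pair_mem_crossEdges ((mem_filter.1 (hC ha)).2.trans_ne (mem_filter.1 hb).2.symm)

lemma card_le_of_subset_crossEdges {m : ℕ} {j : Fin r} (hj : ∀ i, n j ≤ n i)
    (hm : m + 1 ≤ n j)
    {H : Finset (Finset ((i : Fin r) × Fin (n i)))} (hH : H ⊆ crossEdges r 2 n)
    (hfree : ¬hasMatching H (m + 1)) :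
    #H ≤ m * #(univ.filter fun x : (i : Fin r) × Fin (n i) => x.1 ≠ j) := by
  refine (isPartite_crossEdges.mono hH).card_le_mul_of_not_hasMatching (fun w _ => ?_)
    (fun w _ => ?_) hfree
  · rw [card_filter_fst_eq]
    exact hm.trans (hj w.1)
  · have := card_filter_fst_ne_add (n := n) j
    have := card_filter_fst_ne_add (n := n) w.1
    have := hj w.1
    omega

end CrossEdges

theorem stmt0_general (r k : ℕ) (hr : 0 < r) (n : Fin r → ℕ) (hmono : Monotone n)
    (hk : 1 ≤ k) (hkn : k ≤ n ⟨0, hr⟩) :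
    IsGreatest {m : ℕ | ∃ H ⊆ crossEdges r 2 n, ¬ hasMatching H k ∧ H.card = m}
      ((k - 1) * ∑ i ∈ Finset.univ.filter (fun i : Fin r => 0 < i.val), n i) := by
  obtain ⟨m, rfl⟩ := Nat.exists_eq_add_of_le' hk
  have hmin (i : Fin r) : n ⟨0, hr⟩ ≤ n i := hmono (Fin.le_def.2 (Nat.zero_le _))
  have hT : ∑ i ∈ univ.filter (fun i : Fin r => 0 < i.val), n i =
      #(univ.filter fun x : (i : Fin r) × Fin (n i) => x.1 ≠ ⟨0, hr⟩) := by
    rw [card_filter_fst (· ≠ ⟨0, hr⟩)]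
    congr 1
    ext i
    simp [Fin.ext_iff, Nat.pos_iff_ne_zero]
  rw [hT, Nat.add_sub_cancel]
  refine ⟨exists_subset_crossEdges_not_hasMatching (by omega), ?_⟩
  rintro _ ⟨H, hH, hfree, rfl⟩
  exact card_le_of_subset_crossEdges hmin hkn hH hfree

theorem stmt0 (r k : ℕ) (hr : 0 < r) (n : Fin r → ℕ) (hmono : Monotone n)
    (hpos : ∀ i, 0 < n i) (hk : 1 ≤ k) (hkn : k ≤ n ⟨0, hr⟩) :
    IsGreatest {m : ℕ | ∃ H ⊆ crossEdges r 2 n, ¬ hasMatching H k ∧ H.card = m}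
      ((k - 1) * ∑ i ∈ Finset.univ.filter (fun i : Fin r => 0 < i.val), n i) :=
  stmt0_general r k hr n hmono hk hkn
end

section
/- Let n_1 ≤ n_2 ≤ ... ≤ n_r be positive integers with k ≤ n_1. The maximum number of edges in a subgraph of K_{n_1,...,n_r} containing no k pairwise vertex-disjoint copies of K_r equals (∑_{1≤i<j≤r} n_i n_j) − n_1 n_2 + (k−1) n_2. -/
/-- `T` is a copy of `K_r^{(s)}` in the `s`-graph `H`: it is a transversal
(one vertex in each part) all of whose `s`-subsets are edges of `H`. -/
def isKrCopy (r s : ℕ) (n : Fin r → ℕ) (H : Finset (Finset ((i : Fin r) × Fin (n i))))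
    (T : Finset ((i : Fin r) × Fin (n i))) : Prop :=
  (∀ i : Fin r, (T.filter fun v => v.1 = i).card = 1) ∧ ∀ S ∈ T.powersetCard s, S ∈ H

/-- `H` contains `k` pairwise vertex-disjoint copies of `K_r^{(s)}`. -/
def hasKDisjointKr (r s k : ℕ) (n : Fin r → ℕ)
    (H : Finset (Finset ((i : Fin r) × Fin (n i)))) : Prop :=
  ∃ C : Finset (Finset ((i : Fin r) × Fin (n i))), C.card = k ∧
    (∀ T ∈ C, isKrCopy r s n H T) ∧
    (C : Set (Finset ((i : Fin r) × Fin (n i)))).Pairwise Disjoint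

/-- The number of `s`-cliques of the graph with edge set `H`
(an `s`-clique is an `s`-set all of whose `2`-subsets are edges). -/
def cliqueCount (r s : ℕ) (n : Fin r → ℕ)
    (H : Finset (Finset ((i : Fin r) × Fin (n i)))) : ℕ :=
  (Finset.univ.filter fun S : Finset ((i : Fin r) × Fin (n i)) =>
    S.card = s ∧ ∀ e ∈ S.powersetCard 2, e ∈ H).card

open Finset

theorem card_le_prod_of_forall_eq_off {ι : Type*} {β : ι → Type*} [∀ i, Fintype (β i)]
    (s : Finset ι) (S : Finset (∀ i, β i)) (hS : ∀ f ∈ S, ∀ g ∈ S, ∀ i ∉ s, f i = g i) :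
    #S ≤ ∏ i ∈ s, Fintype.card (β i) := by
  classical
  calc #S ≤ #(univ : Finset (∀ i : s, β i)) := by
        refine card_le_card_of_injOn (fun f i => f i) (fun _ _ => mem_coe.2 (mem_univ _)) ?_
        intro f hf g hg hfg
        funext i
        by_cases hi : i ∈ s
        · exact congrFun hfg ⟨i, hi⟩
        · exact hS f hf g hg i hi
    _ = ∏ i ∈ s, Fintype.card (β i) := by
        rw [card_univ, Fintype.card_pi, prod_coe_sort s (fun i => Fintype.card (β i))]

section Products

variable {ι : Type*} [Fintype ι] [DecidableEq ι] {n : ι → ℕ}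

theorem prod_eq_mul_mul_prod_erase_erase {i j : ι} (hij : i ≠ j) :
    ∏ l, n l = n i * n j * ∏ l ∈ (univ.erase i).erase j, n l := by
  rw [mul_assoc, mul_prod_erase _ _ (mem_erase.2 ⟨hij.symm, mem_univ j⟩),
    mul_prod_erase _ _ (mem_univ i)]

theorem prod_erase_erase_le {i j i₀ i₁ : ι} (hij : i ≠ j) (h01 : i₀ ≠ i₁)
    (hpos : 0 < n i₀ * n i₁) (hle : n i₀ * n i₁ ≤ n i * n j) :
    ∏ l ∈ (univ.erase i).erase j, n l ≤ ∏ l ∈ (univ.erase i₀).erase i₁, n l := by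
  refine Nat.le_of_mul_le_mul_left ?_ hpos
  calc n i₀ * n i₁ * ∏ l ∈ (univ.erase i).erase j, n l
      ≤ n i * n j * ∏ l ∈ (univ.erase i).erase j, n l := Nat.mul_le_mul_right _ hle
    _ = n i₀ * n i₁ * ∏ l ∈ (univ.erase i₀).erase i₁, n l := by
        rw [← prod_eq_mul_mul_prod_erase_erase hij, prod_eq_mul_mul_prod_erase_erase h01]

end Products

section Normalize

variable {ι : Type*} {n : ι → ℕ} [∀ l, NeZero (n l)]

/-- The representative with `i₀`-coordinate `0` of the class `{f + c}` of `f`. -/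
def normalizeAt (i₀ : ι) (f : ∀ l, Fin (n l)) : ∀ l, Fin (n l) :=
  fun l => f l - Fin.ofNat (n l) (f i₀)

@[simp] theorem normalizeAt_self (i₀ : ι) (f : ∀ l, Fin (n l)) :
    normalizeAt i₀ f i₀ = 0 := by
  simp [normalizeAt]

theorem normalizeAt_add (i₀ : ι) (f : ∀ l, Fin (n l)) (l : ι) :
    normalizeAt i₀ f l + Fin.ofNat (n l) (f i₀) = f l :=
  sub_add_cancel _ _

theorem eq_of_normalizeAt_eq {i₀ l : ι} (hl : n i₀ ≤ n l) {f g : ∀ l, Fin (n l)}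
    (hfg : normalizeAt i₀ f = normalizeAt i₀ g) (hfgl : f l = g l) : f = g := by
  have hcast : Fin.ofNat (n l) (f i₀) = Fin.ofNat (n l) (g i₀) := by
    have := normalizeAt_add i₀ f l
    rw [hfg, hfgl, ← normalizeAt_add i₀ g l] at this
    exact add_left_cancel this
  have hi₀ : f i₀ = g i₀ := by
    have := congrArg Fin.val hcast
    rwa [Fin.val_ofNat, Fin.val_ofNat, Nat.mod_eq_of_lt ((f i₀).isLt.trans_le hl),
      Nat.mod_eq_of_lt ((g i₀).isLt.trans_le hl), Fin.val_inj] at this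
  funext m
  rw [← normalizeAt_add i₀ f m, ← normalizeAt_add i₀ g m, hfg, hi₀]

theorem exists_subset_card_eq_forall_ne [Fintype ι] [DecidableEq ι] {i₀ : ι}
    (hmin : ∀ l, n i₀ ≤ n l)
    {F : Finset (∀ l, Fin (n l))} {k : ℕ} (hF : (k - 1) * ∏ l ∈ univ.erase i₀, n l < #F) :
    ∃ W ⊆ F, #W = k ∧ ∀ f ∈ W, ∀ g ∈ W, f ≠ g → ∀ l, f l ≠ g l := by
  set T : Finset (∀ l, Fin (n l)) := {g | g i₀ = 0}
  have hT : #T ≤ ∏ l ∈ univ.erase i₀, n l := by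
    have := card_le_prod_of_forall_eq_off (univ.erase i₀) T (fun f hf g hg i hi => by
      obtain rfl : i = i₀ := by simpa using hi
      rw [(mem_filter.1 hf).2, (mem_filter.1 hg).2])
    simpa using this
  obtain ⟨g, -, hg⟩ := exists_lt_card_fiber_of_mul_lt_card_of_maps_to
    (f := normalizeAt i₀) (t := T)
    (fun f _ => mem_filter.2 ⟨mem_univ _, normalizeAt_self i₀ f⟩)
    (by rw [mul_comm]; exact (Nat.mul_le_mul_left _ hT).trans_lt hF)
  obtain ⟨W, hWF, hW⟩ :=
    exists_subset_card_eq (show k ≤ #{f ∈ F | normalizeAt i₀ f = g} by omega)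
  refine ⟨W, hWF.trans (filter_subset _ _), hW, fun f hf f' hf' hne l hl => hne ?_⟩
  exact eq_of_normalizeAt_eq (hmin l)
    (((mem_filter.1 (hWF hf)).2).trans (mem_filter.1 (hWF hf')).2.symm) hl

end Normalize

abbrev Vertex (r : ℕ) (n : Fin r → ℕ) := (i : Fin r) × Fin (n i)

section CrossEdges

variable {r : ℕ} {n : Fin r → ℕ}

theorem mem_crossEdges {s : ℕ} {S : Finset (Vertex r n)} :
    S ∈ crossEdges r s n ↔ #S = s ∧ Set.InjOn Sigma.fst (S : Set (Vertex r n)) := by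
  simp only [crossEdges, mem_filter, mem_univ, true_and, card_le_one, Set.InjOn, mem_coe, and_imp]
  exact and_congr_right fun _ =>
    ⟨fun h u hu v hv huv => h u.1 u hu rfl v hv huv.symm,
      fun h _ u hu hui v hv hvi => h hu hv (hui.trans hvi.symm)⟩

theorem pair_mem_crossEdges_s1 {u v : Vertex r n} (huv : u.1 ≠ v.1) :
    {u, v} ∈ crossEdges r 2 n := by
  have hne : u ≠ v := fun h => huv (congrArg Sigma.fst h)
  rw [mem_crossEdges, coe_pair, Set.injOn_pair]
  exact ⟨card_pair hne, fun h => absurd h huv⟩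

theorem pair_injective {i j : Fin r} (hij : i ≠ j) :
    Function.Injective fun x : Fin (n i) × Fin (n j) =>
      ({⟨i, x.1⟩, ⟨j, x.2⟩} : Finset (Vertex r n)) := by
  intro x y hxy
  rw [← coe_inj, coe_pair, coe_pair, Set.pair_eq_pair_iff] at hxy
  rcases hxy with ⟨h1, h2⟩ | ⟨h1, -⟩
  · exact Prod.ext (by simpa using h1) (by simpa using h2)
  · exact absurd (congrArg Sigma.fst h1) hij

theorem mul_le_card_crossEdges {i j : Fin r} (hij : i ≠ j) : n i * n j ≤ #(crossEdges r 2 n) :=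
  calc n i * n j = #((univ : Finset (Fin (n i) × Fin (n j))).image
        fun x => ({⟨i, x.1⟩, ⟨j, x.2⟩} : Finset (Vertex r n))) := by
        rw [card_image_of_injective _ (pair_injective hij), card_univ, Fintype.card_prod,
          Fintype.card_fin, Fintype.card_fin]
    _ ≤ #(crossEdges r 2 n) :=
        card_le_card (image_subset_iff.2 fun _ _ => pair_mem_crossEdges_s1 hij)

theorem exists_eq_pair_of_mem_crossEdges {e : Finset (Vertex r n)} (he : e ∈ crossEdges r 2 n) :
    ∃ u v : Vertex r n, u.1 < v.1 ∧ e = {u, v} := by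
  obtain ⟨he2, hinj⟩ := mem_crossEdges.1 he
  obtain ⟨u, v, huv, rfl⟩ := card_eq_two.1 he2
  rw [coe_pair, Set.injOn_pair] at hinj
  rcases lt_or_gt_of_ne (mt hinj huv) with h | h
  · exact ⟨u, v, h, rfl⟩
  · exact ⟨v, u, h, pair_comm u v⟩

theorem card_crossEdges_two :
    #(crossEdges r 2 n) =
      ∑ p ∈ univ.filter (fun p : Fin r × Fin r => p.1 < p.2), n p.1 * n p.2 := by
  set P : Finset (Vertex r n × Vertex r n) := {x | x.1.1 < x.2.1}
  have hpairs : #(crossEdges r 2 n) = #P := by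
    refine (card_bij (fun x _ => ({x.1, x.2} : Finset (Vertex r n))) ?_ ?_ ?_).symm
    · intro x hx
      exact pair_mem_crossEdges_s1 (mem_filter.1 hx).2.ne
    · intro x hx y hy hxy
      rw [← coe_inj, coe_pair, coe_pair, Set.pair_eq_pair_iff] at hxy
      rcases hxy with ⟨h1, h2⟩ | ⟨h1, h2⟩
      · exact Prod.ext h1 h2
      · have hx' := (mem_filter.1 hx).2
        rw [h1, h2] at hx'
        exact absurd (hx'.trans (mem_filter.1 hy).2) (lt_irrefl _)
    · intro e he
      obtain ⟨u, v, huv, rfl⟩ := exists_eq_pair_of_mem_crossEdges he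
      exact ⟨(u, v), mem_filter.2 ⟨mem_univ _, huv⟩, rfl⟩
  rw [hpairs]
  calc #P = #((univ.filter fun p : Fin r × Fin r => p.1 < p.2).sigma
        fun p => (univ ×ˢ univ : Finset (Fin (n p.1) × Fin (n p.2)))) := ?_
    _ = _ := by simp [card_sigma]
  refine card_nbij' (fun x => ⟨(x.1.1, x.2.1), (x.1.2, x.2.2)⟩)
    (fun x => (⟨x.1.1, x.2.1⟩, ⟨x.1.2, x.2.2⟩)) ?_ ?_ (fun _ _ => rfl) (fun _ _ => rfl)
  · intro x hx
    simpa using (mem_filter.1 hx).2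
  · intro x hx
    simpa [P] using hx

end CrossEdges

section Transversals

variable {r : ℕ} {n : Fin r → ℕ}

def transversal (f : ∀ i, Fin (n i)) : Finset (Vertex r n) :=
  univ.image fun i => ⟨i, f i⟩

theorem mem_transversal {f : ∀ i, Fin (n i)} {v : Vertex r n} :
    v ∈ transversal f ↔ f v.1 = v.2 := by
  constructor
  · rintro hv
    obtain ⟨i, -, rfl⟩ := mem_image.1 hv
    rfl
  · intro h
    exact mem_image.2 ⟨v.1, mem_univ _, by rw [h]⟩

theorem filter_fst_transversal (f : ∀ i, Fin (n i)) (i : Fin r) :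
    (transversal f).filter (fun v => v.1 = i) = {⟨i, f i⟩} := by
  ext v
  rw [mem_filter, mem_transversal, mem_singleton]
  constructor
  · rintro ⟨hv, rfl⟩
    rw [hv]
  · rintro rfl
    exact ⟨rfl, rfl⟩

theorem powersetCard_transversal_subset_crossEdges (s : ℕ) (f : ∀ i, Fin (n i)) :
    (transversal f).powersetCard s ⊆ crossEdges r s n := by
  intro S hS
  obtain ⟨hSf, hSs⟩ := mem_powersetCard.1 hS
  refine mem_crossEdges.2 ⟨hSs, fun u hu v hv huv => ?_⟩
  have hu' := mem_transversal.1 (hSf hu)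
  have hv' := mem_transversal.1 (hSf hv)
  obtain ⟨i, a⟩ := u
  obtain ⟨j, b⟩ := v
  obtain rfl : i = j := huv
  obtain rfl : a = b := hu'.symm.trans hv'
  rfl

theorem isKrCopy_transversal {s : ℕ} {H : Finset (Finset (Vertex r n))} {f : ∀ i, Fin (n i)}
    (hf : (transversal f).powersetCard s ⊆ H) : isKrCopy r s n H (transversal f) :=
  ⟨fun i => by rw [filter_fst_transversal, card_singleton], fun _ hS => hf hS⟩

theorem transversal_injective : Function.Injective (transversal (n := n)) := by
  intro f g hfg
  funext i
  have : (⟨i, f i⟩ : Vertex r n) ∈ transversal g := hfg ▸ mem_transversal.2 rfl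
  exact (mem_transversal.1 this).symm

theorem disjoint_transversal {f g : ∀ i, Fin (n i)} (hfg : ∀ i, f i ≠ g i) :
    Disjoint (transversal f) (transversal g) :=
  disjoint_left.2 fun v hf hg => hfg v.1 ((mem_transversal.1 hf).trans (mem_transversal.1 hg).symm)

theorem hasKDisjointKr_of_transversals {s k : ℕ} {H : Finset (Finset (Vertex r n))}
    {W : Finset (∀ i, Fin (n i))} (hW : #W = k)
    (hcopy : ∀ f ∈ W, (transversal f).powersetCard s ⊆ H)
    (hne : ∀ f ∈ W, ∀ g ∈ W, f ≠ g → ∀ i, f i ≠ g i) :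
    hasKDisjointKr r s k n H := by
  refine ⟨W.image transversal, by rw [card_image_of_injective _ transversal_injective, hW],
    ?_, ?_⟩
  · intro T hT
    obtain ⟨f, hf, rfl⟩ := mem_image.1 hT
    exact isKrCopy_transversal (hcopy f hf)
  · rintro _ hT _ hT' hTT'
    obtain ⟨f, hf, rfl⟩ := mem_image.1 (mem_coe.1 hT)
    obtain ⟨g, hg, rfl⟩ := mem_image.1 (mem_coe.1 hT')
    exact disjoint_transversal (hne f hf g hg fun h => hTT' (congrArg transversal h))

theorem card_filter_pair_subset_transversal_le (u v : Vertex r n) :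
    #{f : ∀ i, Fin (n i) | {u, v} ⊆ transversal f} ≤
      ∏ l ∈ (univ.erase u.1).erase v.1, n l := by
  have := card_le_prod_of_forall_eq_off ((univ.erase u.1).erase v.1)
    {f : ∀ i, Fin (n i) | {u, v} ⊆ transversal f} (fun f hf g hg l hl => ?_)
  · simpa using this
  rw [mem_filter, insert_subset_iff, singleton_subset_iff, mem_transversal,
    mem_transversal] at hf hg
  rw [mem_erase, mem_erase, not_and_or, not_and_or, not_ne_iff, not_ne_iff] at hl
  rcases hl with rfl | rfl | hl
  · exact hf.2.2.trans hg.2.2.symm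
  · exact hf.2.1.trans hg.2.1.symm
  · exact absurd (mem_univ l) hl

end Transversals

section Bounds

variable {r : ℕ} {n : Fin r → ℕ}

theorem card_filter_not_powersetCard_subset_le {H : Finset (Finset (Vertex r n))} {P : ℕ}
    (hP : ∀ u v : Vertex r n, u.1 < v.1 → ∏ l ∈ (univ.erase u.1).erase v.1, n l ≤ P) :
    #{f : ∀ i, Fin (n i) | ¬ (transversal f).powersetCard 2 ⊆ H} ≤
      #(crossEdges r 2 n \ H) * P := by
  calc #{f : ∀ i, Fin (n i) | ¬ (transversal f).powersetCard 2 ⊆ H}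
      ≤ #((crossEdges r 2 n \ H).biUnion fun e => {f | e ⊆ transversal f}) := card_le_card ?_
    _ ≤ ∑ e ∈ crossEdges r 2 n \ H, #{f : ∀ i, Fin (n i) | e ⊆ transversal f} :=
        card_biUnion_le
    _ ≤ ∑ _e ∈ crossEdges r 2 n \ H, P := sum_le_sum fun e he => ?_
    _ = #(crossEdges r 2 n \ H) * P := by rw [sum_const, smul_eq_mul]
  · intro f hf
    obtain ⟨e, he, heH⟩ := not_subset.1 (mem_filter.1 hf).2
    have heD : e ∈ crossEdges r 2 n \ H :=
      mem_sdiff.2 ⟨powersetCard_transversal_subset_crossEdges 2 f he, heH⟩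
    exact mem_biUnion.2 ⟨e, heD, mem_filter.2 ⟨mem_univ _, (mem_powersetCard.1 he).1⟩⟩
  · obtain ⟨u, v, huv, rfl⟩ := exists_eq_pair_of_mem_crossEdges (mem_sdiff.1 he).1
    exact (card_filter_pair_subset_transversal_le u v).trans (hP u v huv)

theorem hasKDisjointKr_of_card_lt [∀ i, NeZero (n i)] {i₀ i₁ : Fin r} (h01 : i₀ ≠ i₁)
    (hmin : ∀ i, n i₀ ≤ n i) (hsmall : ∀ i j, i < j → n i₀ * n i₁ ≤ n i * n j)
    {k : ℕ} {H : Finset (Finset (Vertex r n))} (hH : H ⊆ crossEdges r 2 n)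
    (hcard : #(crossEdges r 2 n) - n i₀ * n i₁ + (k - 1) * n i₁ < #H) :
    hasKDisjointKr r 2 k n H := by
  have hPpos : 0 < ∏ l ∈ (univ.erase i₀).erase i₁, n l :=
    prod_pos fun i _ => Nat.pos_of_ne_zero (NeZero.ne (n i))
  have hbad := card_filter_not_powersetCard_subset_le (H := H) fun u v huv =>
    prod_erase_erase_le huv.ne h01 (Nat.pos_of_ne_zero (mul_ne_zero (NeZero.ne _) (NeZero.ne _)))
      (hsmall _ _ huv)
  have hmissing : #(crossEdges r 2 n \ H) + (k - 1) * n i₁ < n i₀ * n i₁ := by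
    have := card_sdiff_add_card_eq_card hH
    omega
  have hsplit := card_filter_add_card_filter_not (s := univ)
    (fun f : ∀ i, Fin (n i) => (transversal f).powersetCard 2 ⊆ H)
  rw [card_univ, Fintype.card_pi, prod_congr rfl fun i _ => Fintype.card_fin (n i),
    prod_eq_mul_mul_prod_erase_erase h01] at hsplit
  have hgood : (k - 1) * ∏ l ∈ univ.erase i₀, n l <
      #{f : ∀ i, Fin (n i) | (transversal f).powersetCard 2 ⊆ H} := by
    rw [← mul_prod_erase _ _ (mem_erase.2 ⟨h01.symm, mem_univ i₁⟩)]
    generalize ∏ l ∈ (univ.erase i₀).erase i₁, n l = P at hPpos hbad hsplit ⊢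
    have := Nat.mul_le_mul_right P (Nat.succ_le_of_lt hmissing)
    rw [Nat.succ_eq_add_one, add_mul, add_mul, one_mul] at this
    linarith
  obtain ⟨W, hWF, hW, hne⟩ := exists_subset_card_eq_forall_ne hmin hgood
  exact hasKDisjointKr_of_transversals hW (fun f hf => (mem_filter.1 (hWF hf)).2) hne

theorem not_hasKDisjointKr_of_hitting {s k : ℕ} {H : Finset (Finset (Vertex r n))}
    (A : Finset (Vertex r n)) (hA : #A < k)
    (hhit : ∀ T, isKrCopy r s n H T → ∃ v ∈ A, v ∈ T) :
    ¬ hasKDisjointKr r s k n H := by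
  rintro ⟨C, rfl, hcopy, hdisj⟩
  refine hA.not_ge (card_le_card_of_forall_subsingleton (fun T v => v ∈ T)
    (fun T hT => hhit T (hcopy T hT)) fun v _ T hT T' hT' => ?_)
  by_contra hne
  exact disjoint_left.1 (hdisj hT.1 hT'.1 hne) hT.2 hT'.2

theorem isKrCopy.exists_mem_pair_mem {H : Finset (Finset (Vertex r n))} {T : Finset (Vertex r n)}
    (hT : isKrCopy r 2 n H T) {i j : Fin r} (hij : i ≠ j) :
    ∃ (a : Fin (n i)) (b : Fin (n j)),
      (⟨i, a⟩ : Vertex r n) ∈ T ∧ {⟨i, a⟩, ⟨j, b⟩} ∈ H := by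
  have hpart : ∀ l, ∃ c : Fin (n l), (⟨l, c⟩ : Vertex r n) ∈ T := fun l => by
    obtain ⟨⟨l', c⟩, hv⟩ := card_eq_one.1 (hT.1 l)
    obtain ⟨hvT, rfl⟩ := mem_filter.1 (hv ▸ mem_singleton_self _ : ⟨l', c⟩ ∈ T.filter _)
    exact ⟨c, hvT⟩
  obtain ⟨a, ha⟩ := hpart i
  obtain ⟨b, hb⟩ := hpart j
  have hsub : ({⟨i, a⟩, ⟨j, b⟩} : Finset (Vertex r n)) ⊆ T :=
    insert_subset ha (singleton_subset_iff.2 hb)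
  have hcard : #({⟨i, a⟩, ⟨j, b⟩} : Finset (Vertex r n)) = 2 :=
    card_pair fun h => hij (congrArg Sigma.fst h)
  exact ⟨a, b, ha, hT.2 _ (mem_powersetCard.2 ⟨hsub, hcard⟩)⟩

theorem exists_not_hasKDisjointKr_card_eq {i₀ i₁ : Fin r} (h01 : i₀ ≠ i₁) {k : ℕ}
    (hk : 1 ≤ k) (hkn : k ≤ n i₀) :
    ∃ H ⊆ crossEdges r 2 n, ¬ hasKDisjointKr r 2 k n H ∧
      #H = #(crossEdges r 2 n) - n i₀ * n i₁ + (k - 1) * n i₁ := by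
  set a₀ : Fin (n i₀) := ⟨k - 1, by omega⟩
  set R : Finset (Finset (Vertex r n)) :=
    (Ici a₀ ×ˢ univ).image fun x => {⟨i₀, x.1⟩, ⟨i₁, x.2⟩}
  have hR : R ⊆ crossEdges r 2 n := image_subset_iff.2 fun x _ => pair_mem_crossEdges_s1 h01
  refine ⟨crossEdges r 2 n \ R, sdiff_subset, ?_, ?_⟩
  · refine not_hasKDisjointKr_of_hitting ((Iio a₀).map (Function.Embedding.sigmaMk i₀))
      (by rw [card_map, Fin.card_Iio]; exact Nat.sub_lt hk Nat.one_pos) fun T hT => ?_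
    obtain ⟨a, b, haT, hab⟩ := hT.exists_mem_pair_mem h01
    have ha : a < a₀ := not_le.1 fun h => (mem_sdiff.1 hab).2 <|
      mem_image.2 ⟨(a, b), mem_product.2 ⟨mem_Ici.2 h, mem_univ _⟩, rfl⟩
    exact ⟨⟨i₀, a⟩, mem_map_of_mem _ (mem_Iio.2 ha), haT⟩
  · rw [card_sdiff_of_subset hR, card_image_of_injective _ (pair_injective h01), card_product,
      Fin.card_Ici, card_univ, Fintype.card_fin, show (a₀ : ℕ) = k - 1 from rfl, Nat.sub_mul]
    have := mul_le_card_crossEdges (n := n) h01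
    have := Nat.mul_le_mul_right (n i₁) (show k - 1 ≤ n i₀ by omega)
    omega

end Bounds

theorem stmt1 (r k : ℕ) (hr : 2 ≤ r) (n : Fin r → ℕ) (hmono : Monotone n)
    (hk : 1 ≤ k) (hkn : k ≤ n ⟨0, by omega⟩) :
    IsGreatest {m : ℕ | ∃ H ⊆ crossEdges r 2 n, ¬ hasKDisjointKr r 2 k n H ∧ H.card = m}
      ((∑ p ∈ Finset.univ.filter (fun p : Fin r × Fin r => p.1 < p.2), n p.1 * n p.2)
        - n ⟨0, by omega⟩ * n ⟨1, by omega⟩ + (k - 1) * n ⟨1, by omega⟩) := by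
  set i₀ : Fin r := ⟨0, by omega⟩
  set i₁ : Fin r := ⟨1, by omega⟩
  have h01 : i₀ ≠ i₁ := Fin.ne_of_val_ne zero_ne_one
  have hmin : ∀ i, n i₀ ≤ n i := fun i => hmono (Fin.le_def.2 (Nat.zero_le _))
  have : ∀ i, NeZero (n i) := fun i => ⟨by have := hmin i; omega⟩
  have hsmall : ∀ i j, i < j → n i₀ * n i₁ ≤ n i * n j := fun i j hij =>
    Nat.mul_le_mul (hmin i) (hmono (Fin.le_def.2 (by simp only [i₁]; omega)))
  rw [← card_crossEdges_two]
  refine ⟨exists_not_hasKDisjointKr_card_eq h01 hk hkn, ?_⟩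
  rintro m ⟨H, hH, hfree, rfl⟩
  by_contra! hlt
  exact hfree (hasKDisjointKr_of_card_lt h01 hmin hsmall hH hlt)
end

section
/- Let H be an s-uniform hypergraph and u, v ∈ V(H). Define the shifting operator S_{uv} on edges by S_{uv}(e) = (e ∖ {v}) ∪ {u} if v ∈ e, u ∉ e, and (e ∖ {v}) ∪ {u} is not already an edge of H; otherwise S_{uv}(e) = e. Then the matching number of the shifted hypergraph S_{uv}(H) is at most the matching number of H. -/
/-- The shifting operator applied to a single edge: `S_{uv}(e) = (e ∖ {v}) ∪ {u}`
if `v ∈ e`, `u ∉ e` and `(e ∖ {v}) ∪ {u} ∉ H`; otherwise `S_{uv}(e) = e`. -/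
def shiftEdge {α : Type*} [DecidableEq α] (H : Finset (Finset α)) (u v : α)
    (e : Finset α) : Finset α :=
  if v ∈ e ∧ u ∉ e ∧ insert u (e.erase v) ∉ H then insert u (e.erase v) else e

/-- The shifted hypergraph `S_{uv}(H) = { S_{uv}(e) : e ∈ E(H) }`. -/
def shift {α : Type*} [DecidableEq α] (u v : α) (H : Finset (Finset α)) :
    Finset (Finset α) :=
  H.image (shiftEdge H u v)

/-- Shifting does not increase the matching number: any matching size achieved by
`S_{uv}(H)` is achieved by `H`, i.e. `ν(S_{uv}(H)) ≤ ν(H)`. -/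
theorem stmt4 {α : Type*} [DecidableEq α] (s : ℕ) (H : Finset (Finset α))
    (huniform : ∀ e ∈ H, e.card = s) (u v : α) (k : ℕ)
    (h : hasMatching (shift u v H) k) : hasMatching H k := by
  classical
  obtain ⟨M, hMsub, hcard, hdis⟩ := h
  by_cases hMH : ∀ f ∈ M, f ∈ H
  · exact ⟨M, fun f hf => hMH f hf, hcard, hdis⟩
  push_neg at hMH
  obtain ⟨f, hfM, hfH⟩ := hMH
  have hfS := hMsub hfM
  simp only [shift, Finset.mem_image] at hfS
  obtain ⟨e, heH, hef⟩ := hfS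
  unfold shiftEdge at hef
  by_cases hc : v ∈ e ∧ u ∉ e ∧ insert u (e.erase v) ∉ H
  swap
  · rw [if_neg hc] at hef
    exact absurd (hef ▸ heH) hfH
  rw [if_pos hc] at hef
  obtain ⟨hve, hue, -⟩ := hc
  subst hef
  set F := insert u (e.erase v) with hF
  have huv : u ≠ v := fun h => hue (h ▸ hve)
  have huF : u ∈ F := Finset.mem_insert_self u _
  have hvF : v ∉ F := by
    simp [hF, Finset.mem_insert, huv.symm]
  -- membership characterizations
  have heF : ∀ x ∈ e, x = v ∨ x ∈ F := by
    intro x hx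
    by_cases hxv : x = v
    · exact Or.inl hxv
    · exact Or.inr (Finset.mem_insert_of_mem (Finset.mem_erase.2 ⟨hxv, hx⟩))
  -- no other edge of M contains u, and every other edge of M is in H with the key
  -- closedness property
  have hug : ∀ g ∈ M, g ≠ F → u ∉ g := by
    intro g hg hne hu
    exact (Finset.disjoint_left.1 (hdis hg hfM hne)) hu huF
  have hgH : ∀ g ∈ M, g ≠ F → g ∈ H ∧ (v ∈ g → insert u (g.erase v) ∈ H) := by
    intro g hg hne
    have hgS := hMsub hg
    simp only [shift, Finset.mem_image] at hgS
    obtain ⟨e', he', hse⟩ := hgS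
    unfold shiftEdge at hse
    split_ifs at hse with hc'
    · exact absurd (hse ▸ Finset.mem_insert_self u _) (hug g hg hne)
    · subst hse
      push_neg at hc'
      exact ⟨he', fun hv => hc' hv (hug _ hg hne)⟩
  by_cases hBv : ∃ g ∈ M, v ∈ g
  · -- Case B: some edge g of M contains v; replace F by e and g by insert u (g.erase v)
    obtain ⟨g, hgM, hvg⟩ := hBv
    have hgF : g ≠ F := fun h => hvF (h ▸ hvg)
    obtain ⟨hgH', hG'⟩ := hgH g hgM hgF
    set G' := insert u (g.erase v) with hG'def
    have hG'H : G' ∈ H := hG' hvg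
    have hvG' : v ∉ G' := by
      simp [hG'def, Finset.mem_insert, huv.symm]
    have hG'mem : ∀ x ∈ G', x = u ∨ x ∈ g := by
      intro x hx
      rcases Finset.mem_insert.1 hx with h | h
      · exact Or.inl h
      · exact Or.inr (Finset.mem_of_mem_erase h)
    -- v is only in g among edges of M
    have hvonly : ∀ h ∈ M, h ≠ g → v ∉ h := by
      intro h hh hne hv
      exact (Finset.disjoint_left.1 (hdis hh hgM hne)) hv hvg
    -- disjointness facts
    have heh : ∀ h ∈ M, h ≠ F → h ≠ g → Disjoint e h := by
      intro h hh hF' hg'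
      rw [Finset.disjoint_left]
      intro x hxe hxh
      rcases heF x hxe with rfl | hxF
      · exact hvonly h hh hg' hxh
      · exact (Finset.disjoint_left.1 (hdis hfM hh (Ne.symm hF'))) hxF hxh
    have hG'h : ∀ h ∈ M, h ≠ F → h ≠ g → Disjoint G' h := by
      intro h hh hF' hg'
      rw [Finset.disjoint_left]
      intro x hxG hxh
      rcases hG'mem x hxG with rfl | hxg
      · exact hug h hh hF' hxh
      · exact (Finset.disjoint_left.1 (hdis hgM hh (Ne.symm hg'))) hxg hxh
    have heG' : Disjoint e G' := by
      rw [Finset.disjoint_left]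
      intro x hxe hxG
      rcases hG'mem x hxG with rfl | hxg
      · exact hue hxe
      · rcases heF x hxe with rfl | hxF
        · exact hvG' hxG
        · exact (Finset.disjoint_left.1 (hdis hfM hgM (Ne.symm hgF))) hxF hxg
    -- the new matching
    refine ⟨insert e (insert G' ((M.erase F).erase g)), ?_, ?_, ?_⟩
    · intro x hx
      rcases Finset.mem_insert.1 hx with rfl | hx
      · exact heH
      rcases Finset.mem_insert.1 hx with rfl | hx
      · exact hG'H
      · exact (hgH x (Finset.mem_of_mem_erase (Finset.mem_of_mem_erase hx))
          (Finset.mem_erase.1 (Finset.mem_of_mem_erase hx)).1).1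
    · have henotin : e ∉ insert G' ((M.erase F).erase g) := by
        intro hx
        rcases Finset.mem_insert.1 hx with h | h
        · exact hvG' (h ▸ hve)
        · have hM := Finset.mem_of_mem_erase (Finset.mem_of_mem_erase h)
          have h1 := (Finset.mem_erase.1 (Finset.mem_of_mem_erase h)).1
          have h2 := (Finset.mem_erase.1 h).1
          exact (Finset.disjoint_left.1 (heh e hM h1 h2)) hve hve
      have hG'notin : G' ∉ (M.erase F).erase g := by
        intro h
        have hM := Finset.mem_of_mem_erase (Finset.mem_of_mem_erase h)
        have h1 := (Finset.mem_erase.1 (Finset.mem_of_mem_erase h)).1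
        exact hug G' hM h1 (Finset.mem_insert_self u _)
      have hgMF : g ∈ M.erase F := Finset.mem_erase.2 ⟨hgF, hgM⟩
      have hk2 : 2 ≤ k := by
        rw [← hcard]
        exact Finset.one_lt_card.2 ⟨F, hfM, g, hgM, Ne.symm hgF⟩
      rw [Finset.card_insert_of_notMem henotin, Finset.card_insert_of_notMem hG'notin,
        Finset.card_erase_of_mem hgMF, Finset.card_erase_of_mem hfM, hcard]
      omega
    · intro a ha b hb hab
      simp only [Finset.coe_insert, Set.mem_insert_iff, Finset.mem_coe] at ha hb
      have key : ∀ h, h ∈ (M.erase F).erase g →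
          h ∈ M ∧ h ≠ F ∧ h ≠ g := by
        intro h hh
        exact ⟨Finset.mem_of_mem_erase (Finset.mem_of_mem_erase hh),
          (Finset.mem_erase.1 (Finset.mem_of_mem_erase hh)).1, (Finset.mem_erase.1 hh).1⟩
      rcases ha with rfl | rfl | ha <;> rcases hb with rfl | rfl | hb
      · exact absurd rfl hab
      · exact heG'
      · obtain ⟨h1, h2, h3⟩ := key b hb; exact heh b h1 h2 h3
      · exact heG'.symm
      · exact absurd rfl hab
      · obtain ⟨h1, h2, h3⟩ := key b hb; exact hG'h b h1 h2 h3
      · obtain ⟨h1, h2, h3⟩ := key a ha; exact (heh a h1 h2 h3).symm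
      · obtain ⟨h1, h2, h3⟩ := key a ha; exact (hG'h a h1 h2 h3).symm
      · exact hdis (Finset.mem_coe.2 (key a ha).1) (Finset.mem_coe.2 (key b hb).1) hab
  · -- Case A: no edge of M contains v; replace F by e
    push_neg at hBv
    have heh : ∀ h ∈ M, h ≠ F → Disjoint e h := by
      intro h hh hF'
      rw [Finset.disjoint_left]
      intro x hxe hxh
      rcases heF x hxe with rfl | hxF
      · exact hBv h hh hxh
      · exact (Finset.disjoint_left.1 (hdis hfM hh (Ne.symm hF'))) hxF hxh
    refine ⟨insert e (M.erase F), ?_, ?_, ?_⟩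
    · intro x hx
      rcases Finset.mem_insert.1 hx with rfl | hx
      · exact heH
      · exact (hgH x (Finset.mem_of_mem_erase hx) (Finset.mem_erase.1 hx).1).1
    · have henotin : e ∉ M.erase F := by
        intro hx
        exact (Finset.disjoint_left.1
          (heh e (Finset.mem_of_mem_erase hx) (Finset.mem_erase.1 hx).1)) hve hve
      have hk1 : 1 ≤ k := by
        rw [← hcard]
        exact Finset.card_pos.2 ⟨F, hfM⟩
      rw [Finset.card_insert_of_notMem henotin, Finset.card_erase_of_mem hfM, hcard]
      omega
    · intro a ha b hb hab
      simp only [Finset.coe_insert, Set.mem_insert_iff, Finset.mem_coe] at ha hb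
      rcases ha with rfl | ha <;> rcases hb with rfl | hb
      · exact absurd rfl hab
      · exact heh b (Finset.mem_of_mem_erase hb) (Finset.mem_erase.1 hb).1
      · exact (heh a (Finset.mem_of_mem_erase ha) (Finset.mem_erase.1 ha).1).symm
      · exact hdis (Finset.mem_coe.2 (Finset.mem_of_mem_erase ha))
          (Finset.mem_coe.2 (Finset.mem_of_mem_erase hb)) hab
end

section
/- Let b > 0 and w_1 ≥ w_2 ≥ ... ≥ w_N > 0 be reals with b ≤ N. Consider the linear program: maximize ∑_{i=1}^N x_i subject to ∑_{i=1}^N w_i^{-1} x_i ≤ b and 0 ≤ x_i ≤ w_i for all i. Let M = ⌊b⌋ and a = w_{M+1}(b − M). Then the optimal value equals ∑_{i=1}^{M} w_i + a; that is, every feasible point (x_1,...,x_N) satisfies ∑ x_i ≤ ∑_{i=1}^{M} w_i + a, and this bound is attained. -/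
/-!
This is LP weak duality with an explicit optimal dual. Take the multiplier `c = w (M + 1)` for the
knapsack constraint and `max (w i - c) 0` for the box constraint `x i ≤ w i`: then
`x i ≤ max (w i - c) 0 + c * (x i / w i)` for every feasible coordinate, and summing gives
`∑ x i ≤ ∑ max (w i - c) 0 + c * b`, which for decreasing `w` is `∑_{i ≤ M} w i + c * (b - M)`.
The greedy point, filling the `M` largest boxes and the fraction `b - M` of the next one,
attains this value.
-/

open Finset

def fracKnapsackValues (N : ℕ) (w : ℕ → ℝ) (b : ℝ) : Set ℝ :=
  {z : ℝ | ∃ x : ℕ → ℝ,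
    (∑ i ∈ Finset.Icc 1 N, (w i)⁻¹ * x i ≤ b) ∧
    (∀ i, 1 ≤ i → i ≤ N → 0 ≤ x i ∧ x i ≤ w i) ∧
    z = ∑ i ∈ Finset.Icc 1 N, x i}

/-- The fraction of box `i` filled by the greedy solution. -/
def greedyFill (M : ℕ) (t : ℝ) (i : ℕ) : ℝ :=
  if i ≤ M then 1 else if i = M + 1 then t else 0

lemma greedyFill_mem_Icc {M : ℕ} {t : ℝ} (ht₀ : 0 ≤ t) (ht₁ : t ≤ 1) (i : ℕ) :
    greedyFill M t i ∈ Set.Icc 0 1 := by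
  unfold greedyFill
  split_ifs <;> simp [ht₀, ht₁]

lemma sum_Icc_mul_greedyFill_of_lt (f : ℕ → ℝ) (t : ℝ) {M N : ℕ} (hMN : M < N) :
    ∑ i ∈ Icc 1 N, f i * greedyFill M t i = ∑ i ∈ Icc 1 M, f i + f (M + 1) * t := by
  induction N, Nat.succ_le_of_lt hMN using Nat.le_induction with
  | base =>
    rw [sum_Icc_succ_top (by omega), greedyFill, if_neg (by omega), if_pos rfl]
    congr 1
    refine sum_congr rfl fun i hi => ?_
    rw [greedyFill, if_pos (mem_Icc.1 hi).2, mul_one]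
  | succ n hn ih =>
    rw [sum_Icc_succ_top (by omega), ih (by omega), greedyFill, if_neg (by omega),
      if_neg (by omega), mul_zero, add_zero]

lemma sum_Icc_mul_greedyFill (f : ℕ → ℝ) {t : ℝ} {M N : ℕ} (ht₀ : 0 ≤ t)
    (htN : (M : ℝ) + t ≤ N) :
    ∑ i ∈ Icc 1 N, f i * greedyFill M t i = ∑ i ∈ Icc 1 M, f i + f (M + 1) * t := by
  obtain hMN | hNM := lt_or_ge M N
  · exact sum_Icc_mul_greedyFill_of_lt f t hMN
  · have hNM' : (N : ℝ) ≤ M := by exact_mod_cast hNM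
    obtain rfl : M = N := by exact_mod_cast le_antisymm (by linarith) hNM'
    obtain rfl : t = 0 := by linarith
    rw [mul_zero, add_zero]
    refine sum_congr rfl fun i hi => ?_
    rw [greedyFill, if_pos (mem_Icc.1 hi).2, mul_one]

lemma le_max_sub_add_mul_inv_mul {w x : ℝ} (c : ℝ) (hw : 0 < w) (hx₀ : 0 ≤ x) (hxw : x ≤ w) :
    x ≤ max (w - c) 0 + c * (w⁻¹ * x) := by
  have hcx : c * (w⁻¹ * x) = c / w * x := by ring
  rw [hcx]
  obtain hcw | hwc := le_total c w
  · have hcw' : c / w ≤ 1 := (div_le_one hw).2 hcw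
    have hcancel : c / w * w = c := div_mul_cancel₀ c hw.ne'
    rw [max_eq_left (sub_nonneg.2 hcw)]
    nlinarith [mul_nonneg (sub_nonneg.2 hxw) (sub_nonneg.2 hcw')]
  · have hwc' : 1 ≤ c / w := (one_le_div hw).2 hwc
    rw [max_eq_right (sub_nonpos.2 hwc)]
    nlinarith [mul_nonneg hx₀ (sub_nonneg.2 hwc')]

theorem sum_le_sum_max_sub_add_mul {ι : Type*} {s : Finset ι} {w x : ι → ℝ} {b c : ℝ}
    (hc : 0 ≤ c) (hw : ∀ i ∈ s, 0 < w i) (hx : ∀ i ∈ s, 0 ≤ x i ∧ x i ≤ w i)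
    (hb : ∑ i ∈ s, (w i)⁻¹ * x i ≤ b) :
    ∑ i ∈ s, x i ≤ ∑ i ∈ s, max (w i - c) 0 + c * b :=
  calc ∑ i ∈ s, x i ≤ ∑ i ∈ s, (max (w i - c) 0 + c * ((w i)⁻¹ * x i)) :=
        sum_le_sum fun i hi => le_max_sub_add_mul_inv_mul c (hw i hi) (hx i hi).1 (hx i hi).2
    _ = ∑ i ∈ s, max (w i - c) 0 + c * ∑ i ∈ s, (w i)⁻¹ * x i := by
        rw [sum_add_distrib, mul_sum]
    _ ≤ ∑ i ∈ s, max (w i - c) 0 + c * b := by gcongr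

section

variable {N M : ℕ} {b : ℝ} {w : ℕ → ℝ}

lemma sum_Icc_max_sub_eq (hmono : ∀ i j, 1 ≤ i → i ≤ j → j ≤ N → w j ≤ w i) (hMN : M < N) :
    ∑ i ∈ Icc 1 N, max (w i - w (M + 1)) 0 = ∑ i ∈ Icc 1 M, w i - M * w (M + 1) := by
  have hfill : ∀ i ∈ Icc 1 N,
      max (w i - w (M + 1)) 0 = (w i - w (M + 1)) * greedyFill M 0 i := by
    intro i hi
    rw [mem_Icc] at hi
    unfold greedyFill
    split_ifs with hiM hiM'
    · rw [mul_one, max_eq_left (sub_nonneg.2 (hmono _ _ hi.1 (by omega) hMN))]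
    · rw [hiM', sub_self, max_self, mul_zero]
    · rw [mul_zero, max_eq_right (sub_nonpos.2 (hmono _ _ (by omega) (by omega) hi.2))]
  rw [sum_congr rfl hfill, sum_Icc_mul_greedyFill_of_lt _ _ hMN, mul_zero, add_zero,
    sum_sub_distrib, sum_const, Nat.card_Icc, Nat.add_sub_cancel, nsmul_eq_mul]

lemma greedy_mem_fracKnapsackValues (hpos : ∀ i, 1 ≤ i → i ≤ N → 0 < w i)
    (hMb : (M : ℝ) ≤ b) (hbM : b ≤ M + 1) (hbN : b ≤ N) :
    ∑ i ∈ Icc 1 M, w i + w (M + 1) * (b - M) ∈ fracKnapsackValues N w b := by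
  have ht₀ : 0 ≤ b - M := sub_nonneg.2 hMb
  have htN : (M : ℝ) + (b - M) ≤ N := by linarith
  refine ⟨fun i => w i * greedyFill M (b - M) i, le_of_eq ?_, fun i hi₁ hiN => ?_, ?_⟩
  · calc ∑ i ∈ Icc 1 N, (w i)⁻¹ * (w i * greedyFill M (b - M) i)
          = ∑ i ∈ Icc 1 N, 1 * greedyFill M (b - M) i :=
          sum_congr rfl fun i hi => by
            rw [one_mul, inv_mul_cancel_left₀ (hpos i (mem_Icc.1 hi).1 (mem_Icc.1 hi).2).ne']
      _ = b := by
          rw [sum_Icc_mul_greedyFill _ ht₀ htN, sum_const, Nat.card_Icc, Nat.add_sub_cancel,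
            nsmul_eq_mul, mul_one, one_mul, add_sub_cancel]
  · obtain ⟨hfill₀, hfill₁⟩ := greedyFill_mem_Icc (M := M) ht₀ (by linarith) i
    have hw := hpos i hi₁ hiN
    exact ⟨mul_nonneg hw.le hfill₀, mul_le_of_le_one_right hw.le hfill₁⟩
  · exact (sum_Icc_mul_greedyFill w ht₀ htN).symm

lemma greedy_mem_upperBounds_fracKnapsackValues (hpos : ∀ i, 1 ≤ i → i ≤ N → 0 < w i)
    (hmono : ∀ i j, 1 ≤ i → i ≤ j → j ≤ N → w j ≤ w i) (hMb : (M : ℝ) ≤ b) (hbN : b ≤ N) :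
    ∑ i ∈ Icc 1 M, w i + w (M + 1) * (b - M) ∈ upperBounds (fracKnapsackValues N w b) := by
  rintro _ ⟨x, hxb, hx, rfl⟩
  have hx' : ∀ i ∈ Icc 1 N, 0 ≤ x i ∧ x i ≤ w i :=
    fun i hi => hx i (mem_Icc.1 hi).1 (mem_Icc.1 hi).2
  obtain hMN | hNM := lt_or_ge M N
  · have hc : 0 ≤ w (M + 1) := (hpos (M + 1) (by omega) hMN).le
    calc ∑ i ∈ Icc 1 N, x i
        ≤ ∑ i ∈ Icc 1 N, max (w i - w (M + 1)) 0 + w (M + 1) * b :=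
          sum_le_sum_max_sub_add_mul hc
            (fun i hi => hpos i (mem_Icc.1 hi).1 (mem_Icc.1 hi).2) hx' hxb
      _ = ∑ i ∈ Icc 1 M, w i + w (M + 1) * (b - M) := by
          rw [sum_Icc_max_sub_eq hmono hMN]
          ring
  · have hNM' : (N : ℝ) ≤ M := by exact_mod_cast hNM
    obtain rfl : M = N := by exact_mod_cast le_antisymm (by linarith) hNM'
    obtain rfl : b = M := by linarith
    rw [sub_self, mul_zero, add_zero]
    exact sum_le_sum fun i hi => (hx' i hi).2

end

theorem stmt5 (N : ℕ) (b : ℝ) (w : ℕ → ℝ) (hb : 0 < b) (hbN : b ≤ N)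
    (hmono : ∀ i j, 1 ≤ i → i ≤ j → j ≤ N → w j ≤ w i)
    (hpos : ∀ i, 1 ≤ i → i ≤ N → 0 < w i) :
    IsGreatest {z : ℝ | ∃ x : ℕ → ℝ,
        (∑ i ∈ Finset.Icc 1 N, (w i)⁻¹ * x i ≤ b) ∧
        (∀ i, 1 ≤ i → i ≤ N → 0 ≤ x i ∧ x i ≤ w i) ∧
        z = ∑ i ∈ Finset.Icc 1 N, x i}
      ((∑ i ∈ Finset.Icc 1 ⌊b⌋₊, w i) + w (⌊b⌋₊ + 1) * (b - (⌊b⌋₊ : ℝ))) := by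
  have hMb : (⌊b⌋₊ : ℝ) ≤ b := Nat.floor_le hb.le
  exact ⟨greedy_mem_fracKnapsackValues hpos hMb (Nat.lt_floor_add_one b).le hbN,
    greedy_mem_upperBounds_fracKnapsackValues hpos hmono hMb hbN⟩
end

section
/- Let G be an r-partite graph (r ≥ 2) on parts of any sizes in which every vertex has degree at most 2k−2. If G has a matching M of size k−1 that is maximum (G has no matching of size k), and B = V(G) ∖ V(M), then for each edge {u_i, v_i} ∈ M the number of edges between {u_i, v_i} and B is at most 2k−2, and consequently the total number of edges of G is at most 3(k−1)². -/
/-!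
Let `V` be the set of vertices covered by the maximum matching `M` and `B` its complement.
Maximality makes `B` independent, and for `e ∈ M` two disjoint edges from `e` to `B` could
replace `e`, giving a larger matching. So the edges between `e` and `B` pairwise intersect; as
each of them has one end in `V` and one in `B`, they form a star and number at most the maximum
degree `d`. Counting edge ends then gives `2|G| ≤ |V| d + |M| d ≤ 3 |M| d`.
-/

open Finset

section Matching

variable {α : Type*} [DecidableEq α] {G M : Finset (Finset α)} {e f g : Finset α}

lemma notMem_of_disjoint_biUnion (hf : f.Nonempty) (h : Disjoint f (M.biUnion id)) : f ∉ M :=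
  fun hfM => hf.ne_empty (disjoint_self.mp (h.mono_right (subset_biUnion_of_mem id hfM)))

lemma pairwise_disjoint_insert_of_disjoint_biUnion (hM : (M : Set (Finset α)).Pairwise Disjoint)
    (h : Disjoint f (M.biUnion id)) :
    ((insert f M : Finset (Finset α)) : Set (Finset α)).Pairwise Disjoint := by
  rw [coe_insert]
  exact hM.insert_of_symm fun m hm _ => h.mono_right (subset_biUnion_of_mem id hm)

lemma hasMatching_card_add_one (hMG : M ⊆ G) (hM : (M : Set (Finset α)).Pairwise Disjoint)
    (hfG : f ∈ G) (hf : f.Nonempty) (h : Disjoint f (M.biUnion id)) :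
    hasMatching G (M.card + 1) :=
  ⟨insert f M, insert_subset hfG hMG, card_insert_of_notMem (notMem_of_disjoint_biUnion hf h),
    pairwise_disjoint_insert_of_disjoint_biUnion hM h⟩

lemma hasMatching_card_add_one_of_exchange (hMG : M ⊆ G)
    (hM : (M : Set (Finset α)).Pairwise Disjoint) (he : e ∈ M) (hfG : f ∈ G) (hgG : g ∈ G)
    (hf : f.Nonempty) (hg : g.Nonempty) (hfg : Disjoint f g)
    (hfe : Disjoint f ((M.erase e).biUnion id)) (hge : Disjoint g ((M.erase e).biUnion id)) :
    hasMatching G (M.card + 1) := by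
  have hM' := pairwise_disjoint_insert_of_disjoint_biUnion
    (hM.mono (coe_subset.mpr (erase_subset e M))) hfe
  have hbig := hasMatching_card_add_one (insert_subset hfG ((erase_subset e M).trans hMG)) hM'
    hgG hg (by rw [biUnion_insert]; exact disjoint_union_right.mpr ⟨hfg.symm, hge⟩)
  rwa [card_insert_of_notMem (notMem_of_disjoint_biUnion hf hfe), card_erase_add_one he] at hbig

lemma disjoint_biUnion_erase (hM : (M : Set (Finset α)).Pairwise Disjoint) (he : e ∈ M)
    (h : ∀ x ∈ f, x ∈ e ∨ x ∉ M.biUnion id) : Disjoint f ((M.erase e).biUnion id) := by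
  rw [disjoint_biUnion_right]
  intro m hm
  rw [disjoint_left]
  intro x hxf hxm
  rcases h x hxf with hxe | hxV
  · exact disjoint_left.mp (hM he (mem_of_mem_erase hm) (ne_of_mem_erase hm).symm) hxe hxm
  · exact hxV (mem_biUnion.mpr ⟨m, mem_of_mem_erase hm, hxm⟩)

lemma inter_biUnion_nonempty_of_not_hasMatching (hMG : M ⊆ G)
    (hM : (M : Set (Finset α)).Pairwise Disjoint) (hmax : ¬ hasMatching G (M.card + 1))
    (hfG : f ∈ G) (hf : f.Nonempty) : (f ∩ M.biUnion id).Nonempty := by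
  by_contra h
  rw [not_nonempty_iff_eq_empty, ← disjoint_iff_inter_eq_empty] at h
  exact hmax (hasMatching_card_add_one hMG hM hfG hf h)

end Matching

section Star

variable {α : Type*} [DecidableEq α]

lemma eq_pair_of_card_eq_two {f : Finset α} {x b : α} (hf : f.card = 2) (hx : x ∈ f) (hb : b ∈ f)
    (hxb : x ≠ b) : f = {x, b} :=
  (eq_of_subset_of_card_le (insert_subset hx (singleton_subset_iff.mpr hb))
    (by rw [hf, card_pair hxb])).symm

lemma exists_forall_mem_of_intersecting {F : Finset (Finset α)} (S : Finset α)
    (hF : ∀ f ∈ F, ∃ x ∈ S, ∃ b ∉ S, f = {x, b}) (hint : (F : Set (Finset α)).Intersecting)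
    (hne : F.Nonempty) : ∃ w, ∀ f ∈ F, w ∈ f := by
  obtain ⟨f₀, hf₀⟩ := hne
  obtain ⟨x, hx, b, hb, rfl⟩ := hF f₀ hf₀
  by_cases hall : ∀ f ∈ F, b ∈ f
  · exact ⟨b, hall⟩
  push Not at hall
  obtain ⟨g, hg, hbg⟩ := hall
  obtain ⟨y, hy, c, hc, rfl⟩ := hF g hg
  refine ⟨x, fun f hf => ?_⟩
  obtain ⟨z, hz, d, hd, rfl⟩ := hF f hf
  have h₀ := hint hf₀ hf
  have h₁ := hint hg hf
  have h₂ := hint hf₀ hg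
  simp only [disjoint_insert_left, disjoint_insert_right, disjoint_singleton, mem_insert,
    mem_singleton] at h₀ h₁ h₂ hbg ⊢
  grind

end Star

section EdgesToUncovered

variable {α : Type*} [DecidableEq α] [Fintype α] {G M : Finset (Finset α)} {e f : Finset α}

def edgesToUncovered (G M : Finset (Finset α)) (e : Finset α) : Finset (Finset α) :=
  G.filter fun f => (f ∩ e).Nonempty ∧ (f ∩ (univ \ M.biUnion id)).Nonempty

lemma exists_eq_pair_of_mem_edgesToUncovered (hG : ∀ f ∈ G, f.card = 2) (he : e ∈ M)
    (hf : f ∈ edgesToUncovered G M e) : ∃ x ∈ e, ∃ b ∉ M.biUnion id, f = {x, b} := by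
  obtain ⟨hfG, ⟨x, hx⟩, ⟨b, hb⟩⟩ := mem_filter.mp hf
  rw [mem_inter] at hx hb
  have hbV : b ∉ M.biUnion id := (mem_sdiff.mp hb.2).2
  have hxV : x ∈ M.biUnion id := mem_biUnion.mpr ⟨e, he, hx.2⟩
  exact ⟨x, hx.2, b, hbV, eq_pair_of_card_eq_two (hG f hfG) hx.1 hb.1 (ne_of_mem_of_not_mem hxV hbV)⟩

lemma intersecting_edgesToUncovered (hG : ∀ f ∈ G, f.card = 2) (hMG : M ⊆ G)
    (hM : (M : Set (Finset α)).Pairwise Disjoint) (hmax : ¬ hasMatching G (M.card + 1))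
    (he : e ∈ M) : ((edgesToUncovered G M e : Finset (Finset α)) : Set (Finset α)).Intersecting := by
  intro f hf g hg hfg
  have hpair {f} (hf : f ∈ edgesToUncovered G M e) :
      f ∈ G ∧ f.Nonempty ∧ Disjoint f ((M.erase e).biUnion id) := by
    obtain ⟨x, hx, b, hb, rfl⟩ := exists_eq_pair_of_mem_edgesToUncovered hG he hf
    refine ⟨(mem_filter.mp hf).1, insert_nonempty x {b}, disjoint_biUnion_erase hM he ?_⟩
    simp only [mem_insert, mem_singleton, forall_eq_or_imp, forall_eq]
    exact ⟨Or.inl hx, Or.inr hb⟩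
  obtain ⟨hfG, hf₀, hfe⟩ := hpair hf
  obtain ⟨hgG, hg₀, hge⟩ := hpair hg
  exact hmax (hasMatching_card_add_one_of_exchange hMG hM he hfG hgG hf₀ hg₀ hfg hfe hge)

lemma card_edgesToUncovered_le {d : ℕ} (hG : ∀ f ∈ G, f.card = 2)
    (hdeg : ∀ v, (G.filter fun f => v ∈ f).card ≤ d) (hMG : M ⊆ G)
    (hM : (M : Set (Finset α)).Pairwise Disjoint) (hmax : ¬ hasMatching G (M.card + 1))
    (he : e ∈ M) : (edgesToUncovered G M e).card ≤ d := by
  rcases (edgesToUncovered G M e).eq_empty_or_nonempty with hemp | hne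
  · simp [hemp]
  have hcross (f) (hf : f ∈ edgesToUncovered G M e) :
      ∃ x ∈ M.biUnion id, ∃ b ∉ M.biUnion id, f = {x, b} := by
    obtain ⟨x, hx, b, hb, rfl⟩ := exists_eq_pair_of_mem_edgesToUncovered hG he hf
    exact ⟨x, mem_biUnion.mpr ⟨e, he, hx⟩, b, hb, rfl⟩
  obtain ⟨w, hw⟩ := exists_forall_mem_of_intersecting _ hcross
    (intersecting_edgesToUncovered hG hMG hM hmax he) hne
  exact (card_le_card fun f hf => mem_filter.mpr ⟨(mem_filter.mp hf).1, hw f hf⟩).trans (hdeg w)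

lemma card_filter_inter_uncovered_le {d : ℕ} (hG : ∀ f ∈ G, f.card = 2)
    (hdeg : ∀ v, (G.filter fun f => v ∈ f).card ≤ d) (hMG : M ⊆ G)
    (hM : (M : Set (Finset α)).Pairwise Disjoint) (hmax : ¬ hasMatching G (M.card + 1)) :
    (G.filter fun f => (f ∩ (univ \ M.biUnion id)).Nonempty).card ≤ M.card * d := by
  refine (card_le_card fun f hf => ?_).trans (card_biUnion_le_card_mul M _ d
    fun e he => card_edgesToUncovered_le hG hdeg hMG hM hmax he)
  obtain ⟨hfG, hfB⟩ := mem_filter.mp hf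
  obtain ⟨x, hx⟩ := inter_biUnion_nonempty_of_not_hasMatching hMG hM hmax hfG
    (card_pos.mp (by rw [hG f hfG]; norm_num))
  obtain ⟨e, he, hxe⟩ := mem_biUnion.mp (mem_inter.mp hx).2
  exact mem_biUnion.mpr ⟨e, he, mem_filter.mpr ⟨hfG, ⟨x, mem_inter.mpr ⟨(mem_inter.mp hx).1, hxe⟩⟩, hfB⟩⟩

lemma two_le_card_inter_add_ite {S f : Finset α} (hf : f.card = 2) (hfS : (f ∩ S).Nonempty) :
    2 ≤ (S ∩ f).card + if (f ∩ (univ \ S)).Nonempty then 1 else 0 := by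
  split_ifs with hout
  · rw [inter_comm]
    exact Nat.succ_le_succ (card_pos.mpr hfS)
  · have hfsub : f ⊆ S := fun x hx => by
      by_contra hxS
      exact hout ⟨x, mem_inter.mpr ⟨hx, mem_sdiff.mpr ⟨mem_univ x, hxS⟩⟩⟩
    rw [inter_eq_right.mpr hfsub, hf]

theorem two_mul_card_le_of_not_hasMatching {d : ℕ} (hG : ∀ f ∈ G, f.card = 2)
    (hdeg : ∀ v, (G.filter fun f => v ∈ f).card ≤ d) (hMG : M ⊆ G)
    (hM : (M : Set (Finset α)).Pairwise Disjoint) (hmax : ¬ hasMatching G (M.card + 1)) :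
    2 * G.card ≤ 3 * M.card * d := by
  set V := M.biUnion id
  have hV : V.card ≤ 2 * M.card := by
    rw [mul_comm]
    exact card_biUnion_le_card_mul M id 2 fun e he => (hG e (hMG he)).le
  have hends : ∑ f ∈ G, (V ∩ f).card ≤ V.card * d :=
    sum_card_inter_le fun v _ => hdeg v
  have hB := card_filter_inter_uncovered_le hG hdeg hMG hM hmax
  calc 2 * G.card = ∑ f ∈ G, 2 := by rw [sum_const, smul_eq_mul, mul_comm]
    _ ≤ ∑ f ∈ G, ((V ∩ f).card + if (f ∩ (univ \ V)).Nonempty then 1 else 0) :=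
      sum_le_sum fun f hf => two_le_card_inter_add_ite (hG f hf)
        (inter_biUnion_nonempty_of_not_hasMatching hMG hM hmax hf
          (card_pos.mp (by rw [hG f hf]; norm_num)))
    _ = ∑ f ∈ G, (V ∩ f).card + (G.filter fun f => (f ∩ (univ \ V)).Nonempty).card := by
      rw [sum_add_distrib, card_filter]
    _ ≤ 2 * M.card * d + M.card * d := by gcongr; exact hends.trans (Nat.mul_le_mul_right d hV)
    _ = 3 * M.card * d := by ring

end EdgesToUncovered

theorem stmt13 (r k : ℕ) (hk : 1 ≤ k) (n : Fin r → ℕ)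
    (G : Finset (Finset ((i : Fin r) × Fin (n i)))) (hG : G ⊆ crossEdges r 2 n)
    (hdeg : ∀ v : (i : Fin r) × Fin (n i), (G.filter fun e => v ∈ e).card ≤ 2 * k - 2)
    (M : Finset (Finset ((i : Fin r) × Fin (n i)))) (hMG : M ⊆ G)
    (hMcard : M.card = k - 1)
    (hMdisj : (M : Set (Finset ((i : Fin r) × Fin (n i)))).Pairwise Disjoint)
    (hmax : ¬ hasMatching G k) :
    (∀ e ∈ M, (G.filter fun f => (f ∩ e).Nonempty ∧
        (f ∩ (Finset.univ \ M.biUnion id)).Nonempty).card ≤ 2 * k - 2) ∧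
    G.card ≤ 3 * (k - 1) ^ 2 := by
  have hG2 : ∀ f ∈ G, f.card = 2 := fun f hf => (mem_filter.mp (hG hf)).2.1
  have hmax' : ¬ hasMatching G (M.card + 1) := by rwa [hMcard, Nat.sub_add_cancel hk]
  refine ⟨fun e he => card_edgesToUncovered_le hG2 hdeg hMG hMdisj hmax' he, ?_⟩
  have hcount := two_mul_card_le_of_not_hasMatching hG2 hdeg hMG hMdisj hmax'
  rw [hMcard, show 2 * k - 2 = 2 * (k - 1) by omega] at hcount
  nlinarith
end

section
/- Let G be an r-partite graph whose matching number is exactly k−1, let X be the set of vertices of degree at least 2k−1 in G. Then |X| ≤ k−1 and the matching number of G − X is at most k−1−|X|. -/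
/-!
A vertex of degree at least `2k - 1` can always be added to a matching with fewer than `k`
edges: the at most `2k - 2` vertices already covered, or reserved for other such vertices,
block at most `2k - 2` of its edges. Hence the high-degree vertices `X` together with a
matching of `G - X` of size `k - |X|` greedily yield a matching of size `k` in `G`,
which bounds both `|X|` and the matching number of `G - X`.
-/

open Finset

section

variable {V : Type*} [DecidableEq V] {G : Finset (Finset V)}

theorem filter_mem_not_disjoint_subset_image_pair (hG : ∀ e ∈ G, #e ≤ 2) {x : V}
    {B : Finset V} (hxB : x ∉ B) :
    G.filter (fun e => x ∈ e ∧ ¬Disjoint e B) ⊆ B.image fun w => {x, w} := by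
  intro e he
  obtain ⟨heG, hxe, heB⟩ := mem_filter.mp he
  obtain ⟨w, hwe, hwB⟩ := not_disjoint_iff.mp heB
  have hwx : w ≠ x := fun h => hxB (h ▸ hwB)
  have hpair : {x, w} ⊆ e := insert_subset hxe (singleton_subset_iff.mpr hwe)
  exact mem_image.mpr ⟨w, hwB, eq_of_subset_of_card_le hpair (card_pair hwx.symm ▸ hG e heG)⟩

theorem exists_mem_disjoint_of_card_lt_degree (hG : ∀ e ∈ G, #e ≤ 2) {x : V}
    {B : Finset V} (hxB : x ∉ B) (hdeg : #B < #(G.filter (x ∈ ·))) :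
    ∃ e ∈ G, x ∈ e ∧ Disjoint e B := by
  by_contra! h
  have hsub : G.filter (x ∈ ·) ⊆ G.filter (fun e => x ∈ e ∧ ¬Disjoint e B) := by
    intro e he
    obtain ⟨heG, hxe⟩ := mem_filter.mp he
    exact mem_filter.mpr ⟨heG, hxe, h e heG hxe⟩
  have := (card_le_card (hsub.trans
    (filter_mem_not_disjoint_subset_image_pair hG hxB))).trans card_image_le
  omega

theorem hasMatching_card_add_card (hG : ∀ e ∈ G, #e ≤ 2) {k : ℕ} {X : Finset V}
    (hX : ∀ x ∈ X, 2 * k - 1 ≤ #(G.filter (x ∈ ·))) {M : Finset (Finset V)} (hMG : M ⊆ G)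
    (hM : (M : Set (Finset V)).Pairwise Disjoint) (hMX : ∀ e ∈ M, Disjoint e X)
    (hk : #M + #X ≤ k) : hasMatching G (#M + #X) := by
  induction X using Finset.induction_on generalizing M with
  | empty => exact ⟨M, hMG, rfl, hM⟩
  | @insert x X hxX ih =>
    set B := M.biUnion id ∪ X
    have hxB : x ∉ B := by
      simp only [B, mem_union, mem_biUnion, id, not_or, not_exists, not_and]
      exact ⟨fun f hf hxf => disjoint_left.mp (hMX f hf) hxf (mem_insert_self x X), hxX⟩
    have hB : #B ≤ 2 * #M + #X := by
      have := card_biUnion_le_card_mul M id 2 fun f hf => hG f (hMG hf)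
      have : #B ≤ #(M.biUnion id) + #X := card_union_le _ _
      omega
    rw [card_insert_of_notMem hxX] at hk
    obtain ⟨e, heG, hxe, heB⟩ := exists_mem_disjoint_of_card_lt_degree hG hxB
      (by have := hX x (mem_insert_self x X); omega)
    have heM : e ∉ M := fun h => disjoint_left.mp (hMX e h) hxe (mem_insert_self x X)
    have hMB : ∀ f ∈ M, f ⊆ B := fun f hf =>
      (subset_biUnion_of_mem id hf).trans subset_union_left
    have := ih (fun y hy => hX y (mem_insert_of_mem hy)) (M := insert e M)
      (insert_subset heG hMG)
      (by
        rw [coe_insert]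
        exact Set.pairwise_insert_of_symm.mpr
          ⟨hM, fun f hf _ => disjoint_of_subset_right (hMB f hf) heB⟩)
      (by
        intro f hf
        rcases mem_insert.mp hf with rfl | hfM
        · exact disjoint_of_subset_right subset_union_right heB
        · exact disjoint_of_subset_right (subset_insert x X) (hMX f hfM))
      (by rw [card_insert_of_notMem heM]; omega)
    rwa [card_insert_of_notMem heM, add_right_comm, add_assoc,
      ← card_insert_of_notMem hxX] at this

end

theorem stmt14_general (r k : ℕ) (n : Fin r → ℕ)
    (G : Finset (Finset ((i : Fin r) × Fin (n i)))) (hG : G ⊆ crossEdges r 2 n)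
    (hnu' : ¬ hasMatching G k) :
    (Finset.univ.filter fun v : (i : Fin r) × Fin (n i) =>
        2 * k - 1 ≤ (G.filter fun e => v ∈ e).card).card ≤ k - 1 ∧
    ¬ hasMatching
        (G.filter fun e => ∀ v ∈ e,
          v ∉ Finset.univ.filter fun v : (i : Fin r) × Fin (n i) =>
            2 * k - 1 ≤ (G.filter fun e' => v ∈ e').card)
        (k - (Finset.univ.filter fun v : (i : Fin r) × Fin (n i) =>
          2 * k - 1 ≤ (G.filter fun e => v ∈ e).card).card) := by
  set X := univ.filter fun v : (i : Fin r) × Fin (n i) => 2 * k - 1 ≤ #(G.filter (v ∈ ·))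
  have hG2 : ∀ e ∈ G, #e ≤ 2 := fun e he => (mem_filter.mp (hG he)).2.1.le
  have hdeg : ∀ x ∈ X, 2 * k - 1 ≤ #(G.filter (x ∈ ·)) := fun x hx => (mem_filter.mp hx).2
  have hXk : #X ≤ k - 1 := by
    by_contra! hkX
    obtain ⟨Y, hYX, hY⟩ := exists_subset_card_eq (s := X) (n := k) (by omega)
    have := hasMatching_card_add_card hG2 (fun y hy => hdeg y (hYX hy)) (empty_subset G)
      (by simp) (by simp) (by simp [hY])
    rw [card_empty, zero_add, hY] at this
    exact hnu' this
  refine ⟨hXk, fun ⟨M, hMsub, hMcard, hM⟩ => hnu' ?_⟩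
  have := hasMatching_card_add_card hG2 hdeg (hMsub.trans (filter_subset _ _)) hM
    (fun e he => disjoint_left.mpr (mem_filter.mp (hMsub he)).2) (by omega)
  rwa [show #M + #X = k by omega] at this

theorem stmt14 (r k : ℕ) (hk : 1 ≤ k) (n : Fin r → ℕ)
    (G : Finset (Finset ((i : Fin r) × Fin (n i)))) (hG : G ⊆ crossEdges r 2 n)
    (hnu : hasMatching G (k - 1)) (hnu' : ¬ hasMatching G k) :
    (Finset.univ.filter fun v : (i : Fin r) × Fin (n i) =>
        2 * k - 1 ≤ (G.filter fun e => v ∈ e).card).card ≤ k - 1 ∧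
    ¬ hasMatching
        (G.filter fun e => ∀ v ∈ e,
          v ∉ Finset.univ.filter fun v : (i : Fin r) × Fin (n i) =>
            2 * k - 1 ≤ (G.filter fun e' => v ∈ e').card)
        (k - (Finset.univ.filter fun v : (i : Fin r) × Fin (n i) =>
          2 * k - 1 ≤ (G.filter fun e => v ∈ e).card).card) :=
  stmt14_general r k n G hG hnu'
end
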